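/- arXiv:1201.1646 — 10 statements merged into one kernel-verified Lean document; each statement's English description precedes it below -/
import Mathlib

section
/- Let k ≥ 1, let x be the standard 2k-cycle on ZMod(2k) (the permutation a ↦ a + 1), and let p be a divisor of 2k with prime divisors p_1, …, p_s. Let ν_p denote the number of free involutions y of ZMod(2k) such that the centralizer of ⟨x, y⟩ in S_{2k} equals exactly ⟨x^p⟩, and for each divisor q of 2k let ν̄_q denote the number of free involutions commuting with x^q. Then ν_p = Σ_{S ⊆ {p_1,…,p_s}} (−1)^{|S|} ν̄_{p / ∏_{q ∈ S} q}, i.e. ν_p = ν̄_p − Σ_j ν̄_{p/p_j} + Σ_{j<l} ν̄_{p/(p_j p_l)} − ⋯ . -/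
lemma ie_aux (d p : ℕ) (hp : 0 < p) :
    (∑ S ∈ p.primeFactors.powerset, (-1 : ℤ) ^ S.card *
      (if d ∣ p / S.prod id then 1 else 0)) = if d = p then 1 else 0 := by
  have prodDvd : ∀ S ∈ p.primeFactors.powerset, S.prod id ∣ p := by
    intro S hS
    rw [Finset.mem_powerset] at hS
    refine dvd_trans (Finset.prod_dvd_prod_of_subset S p.primeFactors id hS) ?_
    simpa using Nat.prod_primeFactors_dvd p
  by_cases hdp : d ∣ p
  · have hd0 : 0 < d := Nat.pos_of_dvd_of_pos hdp hp
    have hTsub : (p / d).primeFactors ⊆ p.primeFactors :=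
      Nat.primeFactors_mono (Nat.div_dvd_of_dvd hdp) hp.ne'
    have hpd : p / d ≠ 0 := Nat.div_ne_zero_iff_of_dvd hdp |>.2 ⟨hp.ne', hd0.ne'⟩
    have key : ∀ S ∈ p.primeFactors.powerset,
        (d ∣ p / S.prod id) ↔ S ⊆ (p / d).primeFactors := by
      intro S hS
      have hprimes : ∀ q ∈ S, Nat.Prime q := fun q hq =>
        Nat.prime_of_mem_primeFactors (Finset.mem_powerset.1 hS hq)
      rw [Nat.dvd_div_iff_mul_dvd (prodDvd S hS), mul_comm, ← Nat.dvd_div_iff_mul_dvd hdp]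
      constructor
      · intro h q hq
        exact Nat.mem_primeFactors.2 ⟨hprimes q hq,
          dvd_trans (Finset.dvd_prod_of_mem id hq) h, hpd⟩
      · intro h
        refine dvd_trans (Finset.prod_dvd_prod_of_subset S (p/d).primeFactors id h) ?_
        simpa using Nat.prod_primeFactors_dvd (p / d)
    have h1 : (∑ S ∈ p.primeFactors.powerset, (-1 : ℤ) ^ S.card *
        (if d ∣ p / S.prod id then 1 else 0))
        = ∑ S ∈ p.primeFactors.powerset,
            (if S ⊆ (p / d).primeFactors then (-1 : ℤ) ^ S.card else 0) := by
      refine Finset.sum_congr rfl fun S hS => ?_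
      by_cases h : d ∣ p / S.prod id
      · rw [if_pos h, if_pos ((key S hS).1 h), mul_one]
      · rw [if_neg h, if_neg (fun hc => h ((key S hS).2 hc)), mul_zero]
    rw [h1, ← Finset.sum_filter]
    have h2 : p.primeFactors.powerset.filter (fun S => S ⊆ (p / d).primeFactors)
        = (p / d).primeFactors.powerset := by
      ext S
      simp only [Finset.mem_filter, Finset.mem_powerset]
      exact ⟨fun h => h.2, fun h => ⟨h.trans hTsub, h⟩⟩
    rw [h2, Finset.sum_powerset_neg_one_pow_card]
    have h3 : (p / d).primeFactors = ∅ ↔ d = p := by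
      rw [Nat.primeFactors_eq_empty]
      constructor
      · rintro (h | h)
        · exact absurd h hpd
        · have := Nat.eq_mul_of_div_eq_right hdp h
          omega
      · rintro rfl
        right
        exact Nat.div_self hd0
    simp only [h3]
  · rw [if_neg (by rintro rfl; exact hdp dvd_rfl)]
    refine Finset.sum_eq_zero fun S hS => ?_
    rw [if_neg, mul_zero]
    intro h
    exact hdp (h.trans (Nat.div_dvd_of_dvd (prodDvd S hS)))

/-- Inclusion–exclusion: the number `ν_p` of free involutions `y`
with centralizer of `⟨x, y⟩` exactly `⟨x^p⟩` equals the alternating sum over subsets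
`S` of the prime divisors of `p` of the numbers `ν̄_{p/∏S}` of free involutions
commuting with `x^{p/∏S}`. -/
theorem stmt_4 (k p : ℕ) (hk : 1 ≤ k) (hp : p ∣ 2 * k)
    (x : Equiv.Perm (ZMod (2 * k))) (hx : ∀ a, x a = a + 1) :
    (Nat.card {y : Equiv.Perm (ZMod (2 * k)) //
        y ^ 2 = 1 ∧ (∀ a, y a ≠ a) ∧
        Subgroup.centralizer
            ((Subgroup.closure {x, y} : Subgroup (Equiv.Perm (ZMod (2 * k)))) :
              Set (Equiv.Perm (ZMod (2 * k))))
          = Subgroup.zpowers (x ^ p)} : ℤ) =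
      ∑ S ∈ p.primeFactors.powerset, (-1 : ℤ) ^ S.card *
        (Nat.card {y : Equiv.Perm (ZMod (2 * k)) //
            y ^ 2 = 1 ∧ (∀ a, y a ≠ a) ∧ Commute y (x ^ (p / S.prod id))} : ℤ) := by
  classical
  haveI : NeZero (2 * k) := ⟨by omega⟩
  have hp0 : 0 < p := by
    rcases Nat.eq_zero_or_pos p with h | h
    · subst h; obtain ⟨c, hc⟩ := hp; omega
    · exact h
  -- basic power computations
  have hx_pow : ∀ (m : ℕ) (a : ZMod (2 * k)), (x ^ m) a = a + m := by
    intro m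
    induction m with
    | zero => simp
    | succ n ih =>
      intro a
      rw [pow_succ, Equiv.Perm.mul_apply, hx, ih]
      push_cast
      ring
  have hx2k : x ^ (2 * k) = 1 := by
    ext a
    rw [hx_pow]
    simp [ZMod.natCast_self]
  have hcomm_x : ∀ g : Equiv.Perm (ZMod (2 * k)), Commute g x → ∃ m : ℕ, g = x ^ m := by
    intro g hg
    have h1 : ∀ a, g (a + 1) = g a + 1 := by
      intro a
      have h2 : (g * x) a = (x * g) a := by rw [hg]
      simpa [Equiv.Perm.mul_apply, hx] using h2
    have h2 : ∀ m : ℕ, g (m : ZMod (2 * k)) = (m : ZMod (2 * k)) + g 0 := by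
      intro m
      induction m with
      | zero => simp
      | succ n ih => push_cast; rw [h1, ih]; ring
    refine ⟨(g 0).val, ?_⟩
    ext a
    obtain ⟨m, rfl⟩ := ZMod.natCast_rightInverse.surjective a
    rw [hx_pow, h2, ZMod.natCast_rightInverse (g 0)]
  have hordx : orderOf x = 2 * k := by
    refine Nat.dvd_antisymm (orderOf_dvd_of_pow_eq_one hx2k) ?_
    have h0 : (x ^ orderOf x) 0 = 0 := by rw [pow_orderOf_eq_one]; rfl
    rw [hx_pow] at h0
    simpa using (ZMod.natCast_eq_zero_iff _ _).1 (by simpa using h0)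
  -- the minimal positive exponent commuting with y
  have hE : ∀ y : Equiv.Perm (ZMod (2 * k)), ∃ n, 0 < n ∧ Commute y (x ^ n) :=
    fun y => ⟨2 * k, by omega, by rw [hx2k]; exact Commute.one_right y⟩
  set d : Equiv.Perm (ZMod (2 * k)) → ℕ := fun y => Nat.find (hE y) with hd_def
  have hd_pos : ∀ y, 0 < d y := fun y => (Nat.find_spec (hE y)).1
  have hd_comm : ∀ y, Commute y (x ^ d y) := fun y => (Nat.find_spec (hE y)).2
  have hdvd : ∀ y m, Commute y (x ^ m) ↔ d y ∣ m := by
    intro y m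
    constructor
    · intro hm
      have hr : Commute y (x ^ (m % d y)) := by
        have hq : Commute y (x ^ (d y * (m / d y))) := by
          rw [pow_mul]; exact (hd_comm y).pow_right _
        have hx_eq : x ^ (m % d y) = (x ^ (d y * (m / d y)))⁻¹ * x ^ m := by
          rw [eq_inv_mul_iff_mul_eq, ← pow_add]
          congr 1
          exact Nat.div_add_mod m (d y)
        rw [hx_eq]
        exact hq.inv_right.mul_right hm
      by_contra hcon
      have hr0 : 0 < m % d y := by
        rcases Nat.eq_zero_or_pos (m % d y) with h | h
        · exact absurd (Nat.dvd_of_mod_eq_zero h) hcon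
        · exact h
      have h3 : d y ≤ m % d y := Nat.find_min' (hE y) ⟨hr0, hr⟩
      have h4 := Nat.mod_lt m (hd_pos y)
      omega
    · rintro ⟨j, rfl⟩
      rw [pow_mul]
      exact (hd_comm y).pow_right j
  have hd_dvd : ∀ y, d y ∣ 2 * k := fun y =>
    (hdvd y (2 * k)).1 (by rw [hx2k]; exact Commute.one_right y)
  -- the centralizer of ⟨x, y⟩ is ⟨x ^ d y⟩
  have hcent : ∀ y : Equiv.Perm (ZMod (2 * k)), Subgroup.centralizer
      ((Subgroup.closure {x, y} : Subgroup (Equiv.Perm (ZMod (2 * k)))) :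
        Set (Equiv.Perm (ZMod (2 * k)))) = Subgroup.zpowers (x ^ d y) := by
    intro y
    ext g
    have mem_iff : g ∈ Subgroup.centralizer
        ((Subgroup.closure {x, y} : Subgroup (Equiv.Perm (ZMod (2 * k)))) :
          Set (Equiv.Perm (ZMod (2 * k)))) ↔ Commute g x ∧ Commute g y := by
      rw [Subgroup.mem_centralizer_iff]
      constructor
      · intro h
        exact ⟨(h x (Subgroup.subset_closure (by simp))).symm,
               (h y (Subgroup.subset_closure (by simp))).symm⟩
      · rintro ⟨hgx, hgy⟩ h hh
        have hsub : ({x, y} : Set (Equiv.Perm (ZMod (2 * k)))) ⊆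
            Subgroup.centralizer {g} := by
          rintro z (rfl | rfl) <;>
            · rw [SetLike.mem_coe, Subgroup.mem_centralizer_iff]
              intro w hw
              rw [Set.mem_singleton_iff] at hw
              subst hw
              first
              | exact hgx
              | exact hgy
        have := (Subgroup.closure_le _).2 hsub hh
        rw [Subgroup.mem_centralizer_iff] at this
        exact (this g rfl).symm
    rw [mem_iff, Subgroup.mem_zpowers_iff]
    constructor
    · rintro ⟨hgx, hgy⟩
      obtain ⟨m, rfl⟩ := hcomm_x g hgx
      obtain ⟨j, rfl⟩ := (hdvd y m).1 hgy.symm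
      exact ⟨j, by rw [← zpow_natCast, ← zpow_natCast, ← zpow_mul]; push_cast; ring_nf⟩
    · rintro ⟨j, rfl⟩
      exact ⟨((Commute.refl x).pow_left (d y)).zpow_left j,
             ((hd_comm y).symm.zpow_left j)⟩
  have horder : ∀ q, q ∣ 2 * k → orderOf (x ^ q) = 2 * k / q := by
    intro q hq
    rw [orderOf_pow, hordx, Nat.gcd_eq_right hq]
  have hinj : ∀ a b, a ∣ 2 * k → b ∣ 2 * k →
      Subgroup.zpowers (x ^ a) = Subgroup.zpowers (x ^ b) → a = b := by
    intro a b ha hb hab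
    have h1 : orderOf (x ^ a) = orderOf (x ^ b) := by
      rw [← Nat.card_zpowers, ← Nat.card_zpowers, hab]
    rw [horder a ha, horder b hb] at h1
    have h2 : 2 * k / (2 * k / a) = 2 * k / (2 * k / b) := by rw [h1]
    rwa [Nat.div_div_self ha (by omega), Nat.div_div_self hb (by omega)] at h2
  have hcent_iff : ∀ y : Equiv.Perm (ZMod (2 * k)), (Subgroup.centralizer
      ((Subgroup.closure {x, y} : Subgroup (Equiv.Perm (ZMod (2 * k)))) :
        Set (Equiv.Perm (ZMod (2 * k)))) = Subgroup.zpowers (x ^ p)) ↔ d y = p := by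
    intro y
    rw [hcent y]
    exact ⟨fun h => hinj (d y) p (hd_dvd y) hp h, by rintro rfl; rfl⟩
  -- counting
  set F : Finset (Equiv.Perm (ZMod (2 * k))) :=
    Finset.univ.filter (fun y => y ^ 2 = 1 ∧ ∀ a, y a ≠ a) with hF_def
  have hcount : ∀ (Q : Equiv.Perm (ZMod (2 * k)) → Prop) (_ : DecidablePred Q),
      ((Nat.card {y : Equiv.Perm (ZMod (2 * k)) //
          y ^ 2 = 1 ∧ (∀ a, y a ≠ a) ∧ Q y}) : ℤ)
      = ∑ y ∈ F, (if Q y then (1 : ℤ) else 0) := by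
    intro Q hQdec
    have hfe : Finset.univ.filter (fun y => y ^ 2 = 1 ∧ (∀ a, y a ≠ a) ∧ Q y)
        = F.filter (fun y => Q y) := by
      ext y
      simp only [hF_def, Finset.mem_filter, Finset.mem_univ, true_and, and_assoc]
    rw [Nat.card_eq_fintype_card, Fintype.card_subtype, hfe, Finset.sum_boole]
  have hLHS : (Nat.card {y : Equiv.Perm (ZMod (2 * k)) //
        y ^ 2 = 1 ∧ (∀ a, y a ≠ a) ∧
        Subgroup.centralizer
            ((Subgroup.closure {x, y} : Subgroup (Equiv.Perm (ZMod (2 * k)))) :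
              Set (Equiv.Perm (ZMod (2 * k))))
          = Subgroup.zpowers (x ^ p)} : ℤ)
      = ∑ y ∈ F, (if d y = p then (1 : ℤ) else 0) := by
    refine Eq.trans ?_ (hcount (fun y => d y = p) inferInstance)
    congr 1
    apply Nat.card_congr
    refine Equiv.subtypeEquivRight fun y => ?_
    exact and_congr_right fun _ => and_congr_right fun _ => hcent_iff y
  rw [hLHS]
  have hRHS : ∀ S : Finset ℕ,
      (Nat.card {y : Equiv.Perm (ZMod (2 * k)) //
          y ^ 2 = 1 ∧ (∀ a, y a ≠ a) ∧ Commute y (x ^ (p / S.prod id))} : ℤ)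
      = ∑ y ∈ F, (if d y ∣ p / S.prod id then (1 : ℤ) else 0) := by
    intro S
    refine Eq.trans ?_ (hcount (fun y => d y ∣ p / S.prod id) inferInstance)
    congr 1
    apply Nat.card_congr
    refine Equiv.subtypeEquivRight fun y => ?_
    exact and_congr_right fun _ => and_congr_right fun _ => hdvd y _
  calc ∑ y ∈ F, (if d y = p then (1 : ℤ) else 0)
      = ∑ y ∈ F, ∑ S ∈ p.primeFactors.powerset, (-1 : ℤ) ^ S.card *
          (if d y ∣ p / S.prod id then 1 else 0) := by
        exact Finset.sum_congr rfl fun y _ => ((ie_aux (d y) p hp0)).symm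
    _ = ∑ S ∈ p.primeFactors.powerset, ∑ y ∈ F, (-1 : ℤ) ^ S.card *
          (if d y ∣ p / S.prod id then 1 else 0) := Finset.sum_comm
    _ = _ := by
        refine Finset.sum_congr rfl fun S _ => ?_
        rw [hRHS S, Finset.mul_sum]
end

section
/- Let k ≥ 1, let x be the standard 2k-cycle on ZMod(2k) (the permutation a ↦ a + 1), and let p be a divisor of 2k. The cyclic group ⟨x⟩ acts by conjugation on the set Y_p = { y : y is a free involution of ZMod(2k) and Cent_{S_{2k}}(⟨x, y⟩) = ⟨x^p⟩ }; every orbit of this action has exactly p elements, so the number of orbits (i.e. of equivalence classes of one-vertex maps with k edges whose full automorphism group is ⟨x^p⟩) equals ν_p / p, where ν_p = |Y_p|. -/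
/-- `y` is a free involution of `ZMod (2k)` and the centralizer of `⟨x, y⟩` in the
symmetric group is exactly `⟨x^p⟩` (i.e. `(x, y)` is a one-vertex map with `k` edges
whose full automorphism group is `⟨x^p⟩`). -/
def IsMapWithAut (k p : ℕ) (x y : Equiv.Perm (ZMod (2 * k))) : Prop :=
  y ^ 2 = 1 ∧ (∀ a, y a ≠ a) ∧
  Subgroup.centralizer
      ((Subgroup.closure {x, y} : Subgroup (Equiv.Perm (ZMod (2 * k)))) :
        Set (Equiv.Perm (ZMod (2 * k))))
    = Subgroup.zpowers (x ^ p)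

section Aux

variable {k p : ℕ} {x : Equiv.Perm (ZMod (2 * k))}

lemma aux_xpow (hx : ∀ a, x a = a + 1) : ∀ (n : ℤ) (a : ZMod (2 * k)), (x ^ n) a = a + n := by
  have hnat : ∀ (n : ℕ) (a : ZMod (2 * k)), (x ^ n) a = a + n := by
    intro n
    induction n with
    | zero => intro a; simp
    | succ m ih =>
        intro a
        rw [pow_succ, Equiv.Perm.mul_apply, hx, ih]
        push_cast; ring
  intro n a
  cases n with
  | ofNat m =>
      rw [Int.ofNat_eq_natCast, zpow_natCast, hnat]
      push_cast; ring
  | negSucc m =>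
      rw [zpow_negSucc]
      apply Equiv.injective (x ^ (m + 1))
      rw [← Equiv.Perm.mul_apply, mul_inv_cancel, Equiv.Perm.one_apply, hnat]
      rw [Int.cast_negSucc]
      push_cast; ring

lemma aux_poweq (hx : ∀ a, x a = a + 1) {a b : ℤ} :
    x ^ a = x ^ b ↔ ((a : ZMod (2 * k)) = (b : ZMod (2 * k))) := by
  constructor
  · intro h
    have h0 := congrArg (fun f : Equiv.Perm (ZMod (2 * k)) => f 0) h
    simpa [aux_xpow hx] using h0
  · intro h
    ext c
    rw [aux_xpow hx, aux_xpow hx, h]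

lemma aux_memzpow (hp : p ∣ 2 * k) (hx : ∀ a, x a = a + 1) {a : ℤ} :
    x ^ a ∈ Subgroup.zpowers (x ^ p) ↔ (p : ℤ) ∣ a := by
  rw [Subgroup.mem_zpowers_iff]
  constructor
  · rintro ⟨m, hm⟩
    rw [← zpow_natCast x p, ← zpow_mul, aux_poweq hx,
      ZMod.intCast_eq_intCast_iff, Int.modEq_iff_dvd] at hm
    obtain ⟨t, ht⟩ := hm
    obtain ⟨s, hs⟩ := hp
    have hs' : ((2 * k : ℕ) : ℤ) = (p : ℤ) * (s : ℤ) := by exact_mod_cast congrArg (Nat.cast) hs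
    exact ⟨m + s * t, by push_cast; linear_combination ht + t * hs'⟩
  · rintro ⟨s, rfl⟩
    exact ⟨s, by rw [← zpow_natCast x p, ← zpow_mul]⟩

lemma aux_mem_cent (g y : Equiv.Perm (ZMod (2 * k))) :
    g ∈ Subgroup.centralizer
        ((Subgroup.closure {x, y} : Subgroup (Equiv.Perm (ZMod (2 * k)))) :
          Set (Equiv.Perm (ZMod (2 * k)))) ↔ Commute x g ∧ Commute y g := by
  constructor
  · intro hg
    have hx' := Subgroup.mem_centralizer_iff.mp hg x
      (Subgroup.subset_closure (by simp))
    have hy' := Subgroup.mem_centralizer_iff.mp hg y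
      (Subgroup.subset_closure (by simp))
    exact ⟨hx', hy'⟩
  · rintro ⟨h1, h2⟩
    rw [Subgroup.mem_centralizer_iff]
    intro h hh
    have hh' : h ∈ Subgroup.closure {x, y} := hh
    refine Subgroup.closure_induction (p := fun h _ => Commute h g) ?_ ?_ ?_ ?_ hh'
    · intro z hz
      rcases hz with rfl | hz
      · exact h1
      · rw [Set.mem_singleton_iff] at hz; subst hz; exact h2
    · exact Commute.one_left g
    · exact fun a b _ _ ha hb => ha.mul_left hb
    · exact fun a _ ha => ha.inv_left

lemma aux_commute (hp : p ∣ 2 * k) (hx : ∀ a, x a = a + 1)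
    {y : Equiv.Perm (ZMod (2 * k))} (hY : IsMapWithAut k p x y) (a : ℤ) :
    Commute (x ^ a) y ↔ (p : ℤ) ∣ a := by
  rw [← aux_memzpow hp hx, ← hY.2.2, aux_mem_cent]
  constructor
  · intro h; exact ⟨(Commute.refl x).zpow_right a, h.symm⟩
  · intro h; exact h.2.symm

lemma aux_conj (hp : p ∣ 2 * k) (hx : ∀ a, x a = a + 1)
    {y : Equiv.Perm (ZMod (2 * k))} (hY : IsMapWithAut k p x y) (n : ℤ) :
    IsMapWithAut k p x ((x ^ n)⁻¹ * y * x ^ n) := by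
  obtain ⟨h1, h2, h3⟩ := hY
  have hch : ∀ g : Equiv.Perm (ZMod (2 * k)),
      g ∈ Subgroup.zpowers (x ^ p) ↔ (Commute x g ∧ Commute y g) := fun g => by
    rw [← h3, aux_mem_cent]
  have hyy : y * y = 1 := by rw [← sq, h1]
  refine ⟨?_, ?_, ?_⟩
  · have hgr : (x ^ n)⁻¹ * y * x ^ n * ((x ^ n)⁻¹ * y * x ^ n)
        = (x ^ n)⁻¹ * (y * y) * x ^ n := by group
    rw [sq, hgr, hyy, mul_one, inv_mul_cancel]
  · intro a h
    simp only [Equiv.Perm.mul_apply] at h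
    apply h2 ((x ^ n) a)
    have h' := congrArg (x ^ n : Equiv.Perm (ZMod (2 * k))) h
    simpa using h'
  · ext g
    rw [aux_mem_cent]
    constructor
    · rintro ⟨hxg, hyg⟩
      have hc : Commute (x ^ n) g := hxg.zpow_left n
      have h4 : Commute (x ^ n * ((x ^ n)⁻¹ * y * x ^ n) * (x ^ n)⁻¹) g :=
        (hc.mul_left hyg).mul_left hc.inv_left
      have h5 : x ^ n * ((x ^ n)⁻¹ * y * x ^ n) * (x ^ n)⁻¹ = y := by group
      rw [h5] at h4
      exact (hch g).mpr ⟨hxg, h4⟩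
    · intro hg
      obtain ⟨hxg, hyg⟩ := (hch g).mp hg
      have hc : Commute (x ^ n) g := hxg.zpow_left n
      exact ⟨hxg, (hc.inv_left.mul_left hyg).mul_left hc⟩

end Aux

/-- Conjugation by powers of `x` acts on the set
`Y_p = {y : free involution, Cent⟨x,y⟩ = ⟨x^p⟩}`; every orbit has exactly `p`
elements, so the number of orbits equals `ν_p / p` where `ν_p = |Y_p|`. -/
theorem stmt_5 (k p : ℕ) (hk : 1 ≤ k) (hp : p ∣ 2 * k)
    (x : Equiv.Perm (ZMod (2 * k))) (hx : ∀ a, x a = a + 1) :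
    (∀ y : {y : Equiv.Perm (ZMod (2 * k)) // IsMapWithAut k p x y},
      Nat.card {y' : {y : Equiv.Perm (ZMod (2 * k)) // IsMapWithAut k p x y} //
        ∃ n : ℤ, (y' : Equiv.Perm (ZMod (2 * k))) = (x ^ n)⁻¹ * (y : Equiv.Perm (ZMod (2 * k))) * x ^ n} = p) ∧
    Nat.card (Quot fun (y y' : {y : Equiv.Perm (ZMod (2 * k)) // IsMapWithAut k p x y}) =>
        ∃ n : ℤ, (y' : Equiv.Perm (ZMod (2 * k))) = (x ^ n)⁻¹ * (y : Equiv.Perm (ZMod (2 * k))) * x ^ n)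
      = Nat.card {y : Equiv.Perm (ZMod (2 * k)) // IsMapWithAut k p x y} / p := by
  classical
  haveI : NeZero (2 * k) := ⟨by omega⟩
  have hp0 : 0 < p := Nat.pos_of_dvd_of_pos hp (by omega)
  set α := {y : Equiv.Perm (ZMod (2 * k)) // IsMapWithAut k p x y} with hα
  set r : α → α → Prop := fun y y' =>
    ∃ n : ℤ, (y' : Equiv.Perm (ZMod (2 * k))) = (x ^ n)⁻¹ * (y : Equiv.Perm (ZMod (2 * k))) * x ^ n
    with hr
  -- every orbit has p elements
  have key : ∀ y : α, Nat.card {y' : α // r y y'} = p := by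
    intro y
    have hf : Function.Bijective (fun i : Fin p =>
        (⟨⟨(x ^ (i : ℤ))⁻¹ * (y : Equiv.Perm (ZMod (2 * k))) * x ^ (i : ℤ),
          aux_conj hp hx y.2 (i : ℤ)⟩, ⟨(i : ℤ), rfl⟩⟩ : {y' : α // r y y'})) := by
      constructor
      · intro i j hij
        have heq : (x ^ (i : ℤ))⁻¹ * (y : Equiv.Perm (ZMod (2 * k))) * x ^ (i : ℤ)
            = (x ^ (j : ℤ))⁻¹ * (y : Equiv.Perm (ZMod (2 * k))) * x ^ (j : ℤ) := by
          have := congrArg (fun z : {y' : α // r y y'} => ((z : α) : Equiv.Perm (ZMod (2 * k)))) hij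
          simpa using this
        have e1 : x ^ (i : ℤ) * ((x ^ (i : ℤ))⁻¹ * (y : Equiv.Perm (ZMod (2 * k))) * x ^ (i : ℤ)) * (x ^ (j : ℤ))⁻¹
            = (y : Equiv.Perm (ZMod (2 * k))) * x ^ ((i : ℤ) - (j : ℤ)) := by group
        have e2 : x ^ (i : ℤ) * ((x ^ (j : ℤ))⁻¹ * (y : Equiv.Perm (ZMod (2 * k))) * x ^ (j : ℤ)) * (x ^ (j : ℤ))⁻¹
            = x ^ ((i : ℤ) - (j : ℤ)) * (y : Equiv.Perm (ZMod (2 * k))) := by group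
        have hcom : Commute (x ^ ((i : ℤ) - (j : ℤ))) (y : Equiv.Perm (ZMod (2 * k))) := by
          have h2 : (y : Equiv.Perm (ZMod (2 * k))) * x ^ ((i : ℤ) - (j : ℤ))
              = x ^ ((i : ℤ) - (j : ℤ)) * (y : Equiv.Perm (ZMod (2 * k))) := by
            rw [← e1, ← e2, heq]
          exact h2.symm
        have hdvd : (p : ℤ) ∣ (i : ℤ) - (j : ℤ) := (aux_commute hp hx y.2 _).mp hcom
        have hi : (i : ℕ) < p := i.2
        have hj : (j : ℕ) < p := j.2
        have hz : (i : ℤ) - (j : ℤ) = 0 :=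
          Int.eq_zero_of_dvd_of_natAbs_lt_natAbs hdvd (by omega)
        exact Fin.ext (by omega)
      · rintro ⟨⟨y', hy'⟩, ⟨n, hn⟩⟩
        refine ⟨⟨(n % p).toNat, ?_⟩, ?_⟩
        · have h1 : 0 ≤ n % p := Int.emod_nonneg n (by exact_mod_cast hp0.ne')
          have h2 : n % p < p := Int.emod_lt_of_pos n (by exact_mod_cast hp0)
          omega
        · apply Subtype.ext
          apply Subtype.ext
          show (x ^ (((n % (p:ℤ)).toNat : ℕ) : ℤ))⁻¹ * (y : Equiv.Perm (ZMod (2 * k))) * x ^ (((n % (p:ℤ)).toNat : ℕ) : ℤ) = y'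
          have h1 : 0 ≤ n % p := Int.emod_nonneg n (by exact_mod_cast hp0.ne')
          set m : ℤ := (((n % (p:ℤ)).toNat : ℕ) : ℤ) with hm
          have hmn : m = n % p := by omega
          have hdvd : (p : ℤ) ∣ n - m := by
            rw [hmn]
            refine ⟨n / p, ?_⟩
            have := Int.emod_add_mul_ediv n (p : ℤ)
            linarith
          have hcom : Commute (x ^ (n - m)) (y : Equiv.Perm (ZMod (2 * k))) :=
            (aux_commute hp hx y.2 _).mpr hdvd
          have hyc : (x ^ (n - m))⁻¹ * (y : Equiv.Perm (ZMod (2 * k))) * x ^ (n - m)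
              = (y : Equiv.Perm (ZMod (2 * k))) := by
            rw [mul_assoc, ← hcom.eq, ← mul_assoc, inv_mul_cancel, one_mul]
          have hn' : y' = (x ^ n)⁻¹ * (y : Equiv.Perm (ZMod (2 * k))) * x ^ n := hn
          rw [hn', show (n : ℤ) = (n - m) + m by ring, zpow_add]
          calc (x ^ m)⁻¹ * (y : Equiv.Perm (ZMod (2 * k))) * x ^ m
              = (x ^ m)⁻¹ * ((x ^ (n - m))⁻¹ * (y : Equiv.Perm (ZMod (2 * k))) * x ^ (n - m)) * x ^ m := by
                rw [hyc]
            _ = (x ^ (n - m) * x ^ m)⁻¹ * (y : Equiv.Perm (ZMod (2 * k))) * (x ^ (n - m) * x ^ m) := by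
                group
    have := Nat.card_eq_of_bijective _ hf
    rw [← this, Nat.card_eq_fintype_card, Fintype.card_fin]
  refine ⟨key, ?_⟩
  -- equivalence relation
  have hequiv : Equivalence r := by
    constructor
    · intro y; exact ⟨0, by simp⟩
    · rintro y y' ⟨n, hn⟩
      exact ⟨-n, by rw [hn]; group⟩
    · rintro y y' y'' ⟨m, hm⟩ ⟨n, hn⟩
      exact ⟨m + n, by rw [hn, hm]; group⟩
  haveI : Finite α := Subtype.finite
  haveI : Finite (Quot r) := Finite.of_surjective (Quot.mk r) Quot.exists_rep
  letI : Fintype (Quot r) := Fintype.ofFinite _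
  letI : Fintype α := Fintype.ofFinite _
  have hcard : Nat.card α = Nat.card (Quot r) * p := by
    have e := Equiv.sigmaFiberEquiv (Quot.mk r)
    have h1 : Nat.card α = Nat.card (Σ q : Quot r, {a : α // Quot.mk r a = q}) :=
      (Nat.card_congr e).symm
    have h2 : ∀ q : Quot r, Nat.card {a : α // Quot.mk r a = q} = p := by
      intro q
      obtain ⟨y, rfl⟩ := Quot.exists_rep q
      have e2 : {a : α // Quot.mk r a = Quot.mk r y} ≃ {y' : α // r y y'} :=
        Equiv.subtypeEquivRight (fun y' => by
          rw [Quot.eq, hequiv.eqvGen_iff]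
          exact ⟨fun h => hequiv.symm h, fun h => hequiv.symm h⟩)
      rw [Nat.card_congr e2, key y]
    letI : ∀ q : Quot r, Fintype {a : α // Quot.mk r a = q} := fun q => Fintype.ofFinite _
    rw [h1, Nat.card_eq_fintype_card, Fintype.card_sigma]
    have : ∀ q : Quot r, Fintype.card {a : α // Quot.mk r a = q} = p := by
      intro q; rw [← Nat.card_eq_fintype_card, h2 q]
    rw [Finset.sum_congr rfl (fun q _ => this q), Finset.sum_const, Finset.card_univ,
      smul_eq_mul, Nat.card_eq_fintype_card]
  rw [hcard, Nat.mul_div_cancel _ hp0]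
end

section
/- Let k ≥ 2 and let x be the standard 2k-cycle on ZMod(2k) (the permutation a ↦ a + 1). The number of free involutions y of ZMod(2k) that commute with x² but do not commute with x (equivalently, such that Cent_{S_{2k}}(⟨x, y⟩) = ⟨x²⟩) equals k if k is even and k − 1 if k is odd. Consequently the number of conjugation orbits of ⟨x⟩ on this set, i.e. the number of equivalence classes of strictly edge-transitive one-vertex maps with k edges, is k/2 if k is even and (k−1)/2 if k is odd. -/
set_option maxHeartbeats 1000000


/-- `y` is a free involution of `ZMod (2k)` commuting with `x²` but not with `x`
(equivalently, the one-vertex map `(x, y)` is strictly edge-transitive,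
i.e. `Cent⟨x,y⟩ = ⟨x²⟩`). -/
def IsStrictlyEdgeTransitive (k : ℕ) (x y : Equiv.Perm (ZMod (2 * k))) : Prop :=
  y ^ 2 = 1 ∧ (∀ a, y a ≠ a) ∧ Commute y (x ^ 2) ∧ ¬ Commute y x


namespace Stmt7

/-- parity homomorphism -/
def φ (k : ℕ) : ZMod (2 * k) →+* ZMod 2 := ZMod.castHom (dvd_mul_right 2 k) (ZMod 2)

lemma z2_cases (z : ZMod 2) : z = 0 ∨ z = 1 := by revert z; decide

lemma phi_natCast (k m : ℕ) : φ k (m : ZMod (2*k)) = (m : ZMod 2) := map_natCast _ m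

lemma phi_val {k : ℕ} (hk : 0 < k) (a : ZMod (2*k)) : (φ k a).val = a.val % 2 := by
  haveI : NeZero (2*k) := ⟨by omega⟩
  have h1 : ((a.val : ℕ) : ZMod 2) = (ZMod.cast a : ZMod 2) := ZMod.natCast_val a
  have h2 : φ k a = ZMod.cast a := ZMod.castHom_apply a
  rw [h2, ← h1, ZMod.val_natCast]

lemma phi_one_iff {k : ℕ} (hk : 0 < k) (a : ZMod (2*k)) : φ k a = 1 ↔ a.val % 2 = 1 := by
  constructor
  · intro h
    have := phi_val hk a
    rw [h] at this
    exact this.symm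
  · intro h
    have := phi_val hk a
    rw [h] at this
    rcases z2_cases (φ k a) with h0 | h1
    · rw [h0] at this; simp at this
    · exact h1

lemma phi_zero_iff {k : ℕ} (hk : 0 < k) (a : ZMod (2*k)) : φ k a = 0 ↔ a.val % 2 = 0 := by
  rcases z2_cases (φ k a) with h0 | h1
  · simp [h0]
    have := phi_val hk a; rw [h0] at this; simpa using this.symm
  · rw [h1]
    have := (phi_one_iff hk a).1 h1
    constructor
    · intro h; exact absurd h (by decide)
    · intro h; omega

lemma cast_val_eq {k : ℕ} (hk : 0 < k) (u : ZMod (2*k)) : ((u.val : ℕ) : ZMod (2*k)) = u := by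
  haveI : NeZero (2*k) := ⟨by omega⟩
  rw [ZMod.natCast_val, ZMod.cast_id]

/-- doubling kernel -/
lemma two_mul_eq_zero {k : ℕ} (hk : 0 < k) (u : ZMod (2*k)) (h : u + u = 0) :
    u = 0 ∨ u = (k : ZMod (2*k)) := by
  haveI : NeZero (2*k) := ⟨by omega⟩
  have hv : (u.val + u.val) % (2*k) = 0 := by
    rw [← ZMod.val_add, h, ZMod.val_zero]
  have hlt : u.val < 2*k := ZMod.val_lt u
  have hd : 2*k ∣ u.val + u.val := Nat.dvd_of_mod_eq_zero hv
  obtain ⟨c, hc⟩ := hd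
  have hc2 : u.val = k * c := by nlinarith
  have hcle : c ≤ 1 := by nlinarith
  interval_cases c
  · left; rw [← ZMod.val_eq_zero]; omega
  · right
    rw [← cast_val_eq hk u, hc2]
    norm_num

/-- counting odd numbers below N -/
lemma card_odd_below (N : ℕ) : Nat.card {m : ℕ // Odd m ∧ m < N} = N / 2 := by
  have := Nat.card_eq_of_bijective
    (fun t : Fin (N/2) => (⟨2*t.1+1, ⟨t.1, by omega⟩, by have := t.2; omega⟩ : {m : ℕ // Odd m ∧ m < N}))
    ⟨by
      intro a b hab
      have : 2*a.1+1 = 2*b.1+1 := congrArg Subtype.val hab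
      exact Fin.ext (by omega),
     by
      rintro ⟨m, hm, hlt⟩
      rw [Nat.odd_iff] at hm
      exact ⟨⟨m/2, by omega⟩, Subtype.ext (by simp only; omega)⟩⟩
  rw [← this, Nat.card_eq_fintype_card, Fintype.card_fin]

lemma card_odd_below_ne (k : ℕ) (hk : k % 2 = 1) :
    Nat.card {m : ℕ // Odd m ∧ m < 2*k ∧ m ≠ k} = k - 1 := by
  have := Nat.card_eq_of_bijective
    (fun t : Fin (k-1) => (⟨if t.1 < k/2 then 2*t.1+1 else 2*t.1+3,
      by rw [Nat.odd_iff]; split <;> omega,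
      by have := t.2; split <;> omega⟩ : {m : ℕ // Odd m ∧ m < 2*k ∧ m ≠ k}))
    ⟨by
      intro a b hab
      have h : (if a.1 < k/2 then 2*a.1+1 else 2*a.1+3) = (if b.1 < k/2 then 2*b.1+1 else 2*b.1+3) :=
        congrArg Subtype.val hab
      apply Fin.ext
      split at h <;> split at h <;> omega,
     by
      rintro ⟨m, hm, hlt, hne⟩
      rw [Nat.odd_iff] at hm
      by_cases hc : m < k
      · refine ⟨⟨m/2, by omega⟩, Subtype.ext ?_⟩
        show (if m/2 < k/2 then 2*(m/2)+1 else 2*(m/2)+3) = m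
        split <;> omega
      · refine ⟨⟨(m-3)/2, by omega⟩, Subtype.ext ?_⟩
        show (if (m-3)/2 < k/2 then 2*((m-3)/2)+1 else 2*((m-3)/2)+3) = m
        split <;> omega⟩
  rw [← this, Nat.card_eq_fintype_card, Fintype.card_fin]

section Perm
variable {k : ℕ}

def g (k : ℕ) (u : ZMod (2*k)) (a : ZMod (2*k)) : ZMod (2*k) :=
  a + (if φ k a = 0 then u else -u)

lemma phi_two : φ k 2 = 0 := by
  rw [show (2 : ZMod (2*k)) = 1 + 1 by norm_num, map_add, map_one]
  decide

lemma phi_one_ne : φ k 1 ≠ 0 := by rw [map_one]; decide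

lemma g_invol {u : ZMod (2*k)} (hu : φ k u = 1) : Function.Involutive (g k u) := by
  intro a
  unfold g
  by_cases h : φ k a = 0
  · rw [if_pos h, if_neg (by rw [map_add, h, hu]; decide)]
    ring
  · rcases z2_cases (φ k a) with h0 | h1
    · exact absurd h0 h
    rw [if_neg h, if_pos (by rw [map_add, map_neg, h1, hu]; decide)]
    ring

variable (x : Equiv.Perm (ZMod (2*k)))

lemma x_pow_nat (hx : ∀ a, x a = a + 1) (n : ℕ) (a : ZMod (2*k)) : (x^n) a = a + n := by
  induction n with
  | zero => simp
  | succ n ih =>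
    rw [pow_succ', Equiv.Perm.mul_apply, hx, ih]
    push_cast
    ring

lemma x_zpow (hx : ∀ a, x a = a + 1) (n : ℤ) (a : ZMod (2*k)) : (x^n) a = a + n := by
  cases n with
  | ofNat m =>
    rw [Int.ofNat_eq_coe, zpow_natCast, x_pow_nat x hx]
    push_cast; ring
  | negSucc m =>
    rw [zpow_negSucc]
    have h1 : (x^(m+1)) (a - ((m+1 : ℕ) : ZMod (2*k))) = a := by
      rw [x_pow_nat x hx]; ring
    have h2 : ((x^(m+1))⁻¹ : Equiv.Perm (ZMod (2*k))) a = a - ((m+1 : ℕ) : ZMod (2*k)) := by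
      conv_lhs => rw [← h1]
      exact Equiv.symm_apply_apply _ _
    rw [h2, Int.cast_negSucc]
    push_cast; ring

variable (y : Equiv.Perm (ZMod (2*k)))

lemma y_step (hx : ∀ a, x a = a + 1) (hc : Commute y (x^2)) (a : ZMod (2*k)) : y (a + 2) = y a + 2 := by
  have h := hc.eq
  have h2 : (y * x^2) a = (x^2 * y) a := by rw [h]
  rw [Equiv.Perm.mul_apply, Equiv.Perm.mul_apply] at h2
  have hx2 : ∀ b, (x^2) b = b + 2 := by
    intro b; rw [x_pow_nat x hx]; norm_num
  rw [hx2, hx2] at h2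
  exact h2

lemma y_step_n (hx : ∀ a, x a = a + 1) (hc : Commute y (x^2)) (a : ZMod (2*k)) (m : ℕ) :
    y (a + 2*m) = y a + 2*m := by
  induction m with
  | zero => simp
  | succ m ih =>
    have : a + 2*((m+1 : ℕ) : ZMod (2*k)) = (a + 2*m) + 2 := by push_cast; ring
    rw [this, y_step x y hx hc, ih]
    push_cast; ring

lemma y_form (hk : 0 < k) (hx : ∀ a, x a = a + 1) (hc : Commute y (x^2)) (a : ZMod (2*k)) :
    y a = a + (if φ k a = 0 then y 0 else y 1 - 1) := by
  haveI : NeZero (2*k) := ⟨by omega⟩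
  by_cases h : φ k a = 0
  · rw [if_pos h]
    rw [phi_zero_iff hk] at h
    have hval : a.val = 2 * (a.val / 2) := by omega
    have ha : ((2 * (a.val/2) : ℕ) : ZMod (2*k)) = a := by
      rw [← hval]; exact cast_val_eq hk a
    have ha2 : a = (0 : ZMod (2*k)) + 2 * ((a.val / 2 : ℕ) : ZMod (2*k)) := by
      conv_lhs => rw [← ha]
      push_cast; ring
    conv_lhs => rw [ha2]
    rw [y_step_n x y hx hc]
    conv_rhs => rw [← ha]
    push_cast; ring
  · rw [if_neg h]
    rcases z2_cases (φ k a) with h0 | h1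
    · exact absurd h0 h
    rw [phi_one_iff hk] at h1
    have hval : a.val = 2 * (a.val / 2) + 1 := by omega
    have ha : ((2 * (a.val/2) + 1 : ℕ) : ZMod (2*k)) = a := by
      rw [← hval]; exact cast_val_eq hk a
    have ha2 : a = (1 : ZMod (2*k)) + 2 * ((a.val / 2 : ℕ) : ZMod (2*k)) := by
      conv_lhs => rw [← ha]
      push_cast; ring
    conv_lhs => rw [ha2]
    rw [y_step_n x y hx hc]
    conv_rhs => rw [← ha]
    push_cast; ring

lemma not_commute_of_translation (hx : ∀ a, x a = a + 1) (w : ZMod (2*k))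
    (hy : ∀ a, y a = a + w) : Commute y x := by
  rw [Commute, SemiconjBy]
  ext a
  rw [Equiv.Perm.mul_apply, Equiv.Perm.mul_apply, hx, hy, hy, hx]
  ring

lemma key (hk : 0 < k) (hx : ∀ a, x a = a + 1) (hy : IsStrictlyEdgeTransitive k x y) :
    φ k (y 0) = 1 ∧ y 0 ≠ -(y 0) ∧ ∀ a, y a = g k (y 0) a := by
  obtain ⟨h1, h2, h3, h4⟩ := hy
  have hform : ∀ a, y a = a + (if φ k a = 0 then y 0 else y 1 - 1) := y_form x y hk hx h3
  have hyy : ∀ a, y (y a) = a := by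
    intro a
    have : (y^2) a = (1 : Equiv.Perm (ZMod (2*k))) a := by rw [h1]
    rwa [sq, Equiv.Perm.mul_apply, Equiv.Perm.one_apply] at this
  have hune : y 0 ≠ y 1 - 1 := by
    intro h
    apply h4
    apply not_commute_of_translation x y hx (y 0)
    intro a
    rw [hform a]
    split <;> rw [h]
  have hyu : y (y 0) = 0 := hyy 0
  have hphiu : φ k (y 0) = 1 := by
    rcases z2_cases (φ k (y 0)) with h0 | h1'
    · exfalso
      have hu2 : y 0 + y 0 = 0 := by
        have := hform (y 0)
        rw [if_pos h0, hyu] at this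
        linear_combination -this
      have hu0 : y 0 ≠ (0 : ZMod (2*k)) := h2 0
      have huk : y 0 = ((k : ℕ) : ZMod (2*k)) := by
        rcases two_mul_eq_zero hk (y 0) hu2 with h | h
        · exact absurd h hu0
        · exact h
      have hy1 : y 1 = 1 + (y 1 - 1) := by ring
      have hyv : y (1 + (y 1 - 1)) = 1 := by rw [← hy1]; exact hyy 1
      have hv0 : y 1 - 1 ≠ (0 : ZMod (2*k)) := by
        intro h
        apply h2 1
        linear_combination h
      rcases z2_cases (φ k (y 1 - 1)) with hv0' | hv1
      · have heq : y (1 + (y 1 - 1)) = (1 + (y 1 - 1)) + (y 1 - 1) := by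
          rw [hform (1 + (y 1 - 1)), if_neg (by rw [map_add, map_one, hv0']; decide)]
        rw [hyv] at heq
        have hv2 : (y 1 - 1) + (y 1 - 1) = 0 := by linear_combination -heq
        have hvk : y 1 - 1 = ((k : ℕ) : ZMod (2*k)) := by
          rcases two_mul_eq_zero hk (y 1 - 1) hv2 with h | h
          · exact absurd h hv0
          · exact h
        exact hune (huk.trans hvk.symm)
      · have heq : y (1 + (y 1 - 1)) = (1 + (y 1 - 1)) + y 0 := by
          rw [hform (1 + (y 1 - 1)), if_pos (by rw [map_add, map_one, hv1]; decide)]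
        rw [hyv] at heq
        have hveq : y 1 - 1 = -(y 0) := by linear_combination -heq
        rw [hveq, map_neg, h0] at hv1
        simp at hv1
    · exact h1'
  have hvu : y 1 - 1 = -(y 0) := by
    have := hform (y 0)
    rw [if_neg (by rw [hphiu]; decide), hyu] at this
    linear_combination -this
  refine ⟨hphiu, ?_, ?_⟩
  · intro h
    exact hune (by rw [hvu, ← h])
  · intro a
    unfold g
    rw [hform a]
    congr 1
    by_cases h : φ k a = 0
    · rw [if_pos h, if_pos h]
    · rw [if_neg h, if_neg h, hvu]

lemma mem_of (hx : ∀ a, x a = a + 1) {u : ZMod (2*k)} (hu : φ k u = 1) (hne : u ≠ -u) :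
    IsStrictlyEdgeTransitive k x (Function.Involutive.toPerm (g k u) (g_invol hu)) := by
  have hpa : ∀ a, (Function.Involutive.toPerm (g k u) (g_invol hu)) a = g k u a := fun a => rfl
  have hu0 : u ≠ 0 := by
    intro h; rw [h, map_zero] at hu; exact absurd hu (by decide)
  refine ⟨?_, ?_, ?_, ?_⟩
  · ext a
    rw [sq, Equiv.Perm.mul_apply, hpa, hpa, Equiv.Perm.one_apply]
    exact g_invol hu a
  · intro a h
    rw [hpa] at h
    unfold g at h
    by_cases hp0 : φ k a = 0
    · rw [if_pos hp0] at h
      exact hu0 (by linear_combination h)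
    · rw [if_neg hp0] at h
      exact hu0 (by linear_combination -h)
  · show _ * x^2 = x^2 * _
    ext a
    rw [Equiv.Perm.mul_apply, Equiv.Perm.mul_apply, hpa, hpa]
    have hx2 : ∀ b, (x^2) b = b + 2 := fun b => by rw [x_pow_nat x hx]; norm_num
    rw [hx2, hx2]
    unfold g
    have hphi : φ k (a + 2) = φ k a := by rw [map_add, phi_two, add_zero]
    rw [hphi]
    by_cases hc : φ k a = 0
    · rw [if_pos hc]; ring
    · rw [if_neg hc]; ring
  · intro hc
    have h0 : ∀ b, (Function.Involutive.toPerm (g k u) (g_invol hu) * x) b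
        = (x * Function.Involutive.toPerm (g k u) (g_invol hu)) b := fun b => by rw [hc.eq]
    have h1 := h0 0
    rw [Equiv.Perm.mul_apply, Equiv.Perm.mul_apply, hx, hpa, hpa, hx] at h1
    rw [zero_add] at h1
    unfold g at h1
    rw [if_neg (by rw [map_one]; decide), if_pos (by rw [map_zero])] at h1
    exact hne (by linear_combination -h1)

lemma card_U (hk : 2 ≤ k) :
    Nat.card {u : ZMod (2*k) // φ k u = 1 ∧ u ≠ -u}
      = (if k % 2 = 0 then k else k - 1) := by
  haveI : NeZero (2*k) := ⟨by omega⟩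
  have hk0 : 0 < k := by omega
  -- facts about members
  have hval : ∀ u : {u : ZMod (2*k) // φ k u = 1 ∧ u ≠ -u},
      u.1.val % 2 = 1 ∧ u.1.val < 2*k ∧ u.1.val ≠ k := by
    rintro ⟨u, hu1, hu2⟩
    show u.val % 2 = 1 ∧ u.val < 2*k ∧ u.val ≠ k
    have h1 : u.val % 2 = 1 := (phi_one_iff hk0 u).1 hu1
    have h2 : u.val < 2*k := ZMod.val_lt u
    refine ⟨h1, h2, ?_⟩
    intro h
    have hz : u ≠ 0 := by intro hz; rw [hz, ZMod.val_zero] at h1; simp at h1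
    have hnv : (-u).val = 2*k - u.val := by rw [ZMod.neg_val, if_neg hz]
    apply hu2
    apply ZMod.val_injective
    omega
  have hbij : Function.Bijective
      (fun m : {m : ℕ // Odd m ∧ m < 2*k ∧ m ≠ k} =>
        (⟨((m.1 : ℕ) : ZMod (2*k)), by
          obtain ⟨m, hm1, hm2, hm3⟩ := m
          rw [Nat.odd_iff] at hm1
          constructor
          · show φ k ((m : ℕ) : ZMod (2*k)) = 1
            rw [phi_natCast, ← ZMod.natCast_mod m 2, hm1, Nat.cast_one]
          · show ((m : ℕ) : ZMod (2*k)) ≠ -((m : ℕ) : ZMod (2*k))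
            intro h
            have hv1 : ((m : ℕ) : ZMod (2*k)).val = m := ZMod.val_cast_of_lt hm2
            have hv2 : (-((m : ℕ) : ZMod (2*k))).val = 2*k - m := by
              rw [ZMod.neg_val, if_neg (by intro hz; rw [hz, ZMod.val_zero] at hv1; omega), hv1]
            rw [← h, hv1] at hv2
            omega⟩ : {u : ZMod (2*k) // φ k u = 1 ∧ u ≠ -u})) := by
    constructor
    · rintro ⟨m, hm⟩ ⟨m', hm'⟩ h
      have hcast : ((m : ℕ) : ZMod (2*k)) = ((m' : ℕ) : ZMod (2*k)) := congrArg Subtype.val h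
      have := congrArg ZMod.val hcast
      rw [ZMod.val_cast_of_lt hm.2.1, ZMod.val_cast_of_lt hm'.2.1] at this
      exact Subtype.ext this
    · rintro ⟨u, hu⟩
      obtain ⟨h1, h2, h3⟩ := hval ⟨u, hu⟩
      refine ⟨⟨u.val, Nat.odd_iff.2 h1, h2, h3⟩, ?_⟩
      apply Subtype.ext
      exact cast_val_eq hk0 u
  rw [← Nat.card_eq_of_bijective _ hbij]
  by_cases hpar : k % 2 = 0
  · rw [if_pos hpar]
    have e : {m : ℕ // Odd m ∧ m < 2*k ∧ m ≠ k} ≃ {m : ℕ // Odd m ∧ m < 2*k} :=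
      Equiv.subtypeEquivRight (fun m => by
        rw [Nat.odd_iff]
        constructor
        · rintro ⟨a, b, c⟩; exact ⟨a, b⟩
        · rintro ⟨a, b⟩; exact ⟨a, b, by omega⟩)
    rw [Nat.card_congr e, card_odd_below]
    omega
  · rw [if_neg hpar, card_odd_below_ne k (by omega)]


lemma facts_lemma (hk0 : 0 < k) (u : {u : ZMod (2*k) // φ k u = 1 ∧ u ≠ -u}) :
    u.1.val % 2 = 1 ∧ u.1.val < 2*k ∧ u.1.val ≠ k ∧ (-u.1).val = 2*k - u.1.val := by
  haveI : NeZero (2*k) := ⟨by omega⟩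
  obtain ⟨u, hu1, hu2⟩ := u
  show u.val % 2 = 1 ∧ u.val < 2*k ∧ u.val ≠ k ∧ (-u).val = 2*k - u.val
  have h1 : u.val % 2 = 1 := (phi_one_iff hk0 u).1 hu1
  have h2 : u.val < 2*k := ZMod.val_lt u
  have hz : u ≠ 0 := by intro hz; rw [hz, ZMod.val_zero] at h1; simp at h1
  have hnv : (-u).val = 2*k - u.val := by rw [ZMod.neg_val, if_neg hz]
  refine ⟨h1, h2, ?_, hnv⟩
  intro h
  apply hu2
  apply ZMod.val_injective
  omega

lemma min_mem (hk0 : 0 < k) (u : {u : ZMod (2*k) // φ k u = 1 ∧ u ≠ -u}) :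
    Odd (min u.1.val ((-u.1).val)) ∧ min u.1.val ((-u.1).val) < k := by
  obtain ⟨f1, f2, f3, f4⟩ := facts_lemma hk0 u
  constructor
  · rw [Nat.odd_iff]; omega
  · omega

lemma memU_lemma (hk0 : 0 < k) (m : ℕ) (hm1 : m % 2 = 1) (hm2 : m < k) :
    φ k ((m : ℕ) : ZMod (2*k)) = 1 ∧ ((m : ℕ) : ZMod (2*k)) ≠ -((m : ℕ) : ZMod (2*k)) := by
  haveI : NeZero (2*k) := ⟨by omega⟩
  have hv1 : ((m : ℕ) : ZMod (2*k)).val = m := ZMod.val_cast_of_lt (by omega)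
  constructor
  · rw [phi_natCast, ← ZMod.natCast_mod m 2, hm1, Nat.cast_one]
  · intro h
    have hv2 : (-((m : ℕ) : ZMod (2*k))).val = 2*k - m := by
      rw [ZMod.neg_val, if_neg (by intro hz; rw [hz, ZMod.val_zero] at hv1; omega), hv1]
    rw [← h, hv1] at hv2
    omega

lemma g_zero (u : ZMod (2*k)) : g k u 0 = u := by
  unfold g
  rw [if_pos (map_zero (φ k))]
  ring

lemma card_quot (hk : 2 ≤ k) :
    Nat.card (Quot fun (u u' : {u : ZMod (2*k) // φ k u = 1 ∧ u ≠ -u}) =>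
      u'.1 = u.1 ∨ u'.1 = -u.1) = k / 2 := by
  haveI : NeZero (2*k) := ⟨by omega⟩
  have hk0 : 0 < k := by omega
  have e : (Quot fun (u u' : {u : ZMod (2*k) // φ k u = 1 ∧ u ≠ -u}) =>
      u'.1 = u.1 ∨ u'.1 = -u.1) ≃ {m : ℕ // Odd m ∧ m < k} :=
  { toFun := Quot.lift
      (fun u => (⟨min u.1.val ((-u.1).val), min_mem hk0 u⟩ : {m : ℕ // Odd m ∧ m < k})) (by
      rintro u u' (h | h)
      · apply Subtype.ext
        show min u.1.val ((-u.1).val) = min u'.1.val ((-u'.1).val)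
        rw [h]
      · apply Subtype.ext
        show min u.1.val ((-u.1).val) = min u'.1.val ((-u'.1).val)
        rw [h, neg_neg]
        exact Nat.min_comm _ _)
    invFun := fun m => Quot.mk _ ⟨((m.1 : ℕ) : ZMod (2*k)),
      memU_lemma hk0 m.1 (Nat.odd_iff.1 m.2.1) m.2.2⟩
    left_inv := by
      apply Quot.ind
      intro u
      apply Quot.sound
      rcases min_choice u.1.val ((-u.1).val) with hmin | hmin
      · left
        show u.1 = ((min u.1.val ((-u.1).val) : ℕ) : ZMod (2*k))
        rw [hmin, cast_val_eq hk0]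
      · right
        show u.1 = -((min u.1.val ((-u.1).val) : ℕ) : ZMod (2*k))
        rw [hmin, cast_val_eq hk0, neg_neg]
    right_inv := by
      rintro ⟨m, hm1, hm2⟩
      apply Subtype.ext
      show min (((m : ℕ) : ZMod (2*k)).val) ((-((m : ℕ) : ZMod (2*k))).val) = m
      have hv1 : ((m : ℕ) : ZMod (2*k)).val = m := ZMod.val_cast_of_lt (by omega)
      rw [Nat.odd_iff] at hm1
      have hv2 : (-((m : ℕ) : ZMod (2*k))).val = 2*k - m := by
        rw [ZMod.neg_val, if_neg (by intro hz; rw [hz, ZMod.val_zero] at hv1; omega), hv1]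
      rw [hv1, hv2]
      omega }
  rw [Nat.card_congr e, card_odd_below]

end Perm
end Stmt7

open Stmt7

/-- The number of free involutions of `ZMod (2k)` commuting with
`x²` but not with `x` is `k` if `k` is even and `k - 1` if `k` is odd; the number of
conjugation orbits of `⟨x⟩` on this set is `k/2`, resp. `(k-1)/2`. -/
theorem stmt_7 (k : ℕ) (hk : 2 ≤ k)
    (x : Equiv.Perm (ZMod (2 * k))) (hx : ∀ a, x a = a + 1) :
    Nat.card {y : Equiv.Perm (ZMod (2 * k)) // IsStrictlyEdgeTransitive k x y}
      = (if k % 2 = 0 then k else k - 1) ∧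
    Nat.card (Quot fun (y y' : {y : Equiv.Perm (ZMod (2 * k)) // IsStrictlyEdgeTransitive k x y}) =>
        ∃ n : ℤ, (y' : Equiv.Perm (ZMod (2 * k))) = (x ^ n)⁻¹ * (y : Equiv.Perm (ZMod (2 * k))) * x ^ n)
      = (if k % 2 = 0 then k / 2 else (k - 1) / 2) := by
  haveI : NeZero (2*k) := ⟨by omega⟩
  have hk0 : 0 < k := by omega
  set F : {u : ZMod (2*k) // φ k u = 1 ∧ u ≠ -u} →
      {y : Equiv.Perm (ZMod (2*k)) // IsStrictlyEdgeTransitive k x y} :=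
    fun u => ⟨Function.Involutive.toPerm (g k u.1) (g_invol u.2.1),
      mem_of x hx u.2.1 u.2.2⟩ with hFdef
  have hFapp : ∀ u a, (F u).1 a = g k u.1 a := fun u a => rfl
  have hFbij : Function.Bijective F := by
    constructor
    · intro u u' h
      apply Subtype.ext
      have h0 := Equiv.ext_iff.1 (congrArg Subtype.val h) 0
      rw [hFapp, hFapp, g_zero, g_zero] at h0
      exact h0
    · rintro ⟨y, hy⟩
      obtain ⟨h1, h2, h3⟩ := key x y hk0 hx hy
      refine ⟨⟨y 0, h1, h2⟩, ?_⟩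
      apply Subtype.ext
      apply Equiv.ext
      intro a
      rw [hFapp]
      exact (h3 a).symm
  have hxz : ∀ (n : ℤ) (a : ZMod (2*k)), (x^n) a = a + n := x_zpow x hx
  have hxinv : ∀ (n : ℤ) (b : ZMod (2*k)), ((x^n)⁻¹ : Equiv.Perm (ZMod (2*k))) b = b - n := by
    intro n b
    have h : (x^n) (b - (n : ZMod (2*k))) = b := by rw [hxz]; ring
    conv_lhs => rw [← h]
    exact Equiv.symm_apply_apply _ _
  have hxinv1 : ∀ b : ZMod (2*k), (x⁻¹ : Equiv.Perm (ZMod (2*k))) b = b - 1 := by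
    intro b
    have h : x (b - 1) = b := by rw [hx]; ring
    conv_lhs => rw [← h]
    exact Equiv.symm_apply_apply _ _
  constructor
  · rw [← Nat.card_eq_of_bijective F hFbij]
    exact card_U hk
  · have hrel : ∀ u u' : {u : ZMod (2*k) // φ k u = 1 ∧ u ≠ -u},
        (u'.1 = u.1 ∨ u'.1 = -u.1) ↔
        (∃ n : ℤ, ((F u' : {y : Equiv.Perm (ZMod (2*k)) // IsStrictlyEdgeTransitive k x y}) :
            Equiv.Perm (ZMod (2*k))) = (x ^ n)⁻¹ * ((F u :
            {y : Equiv.Perm (ZMod (2*k)) // IsStrictlyEdgeTransitive k x y}) :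
            Equiv.Perm (ZMod (2*k))) * x ^ n) := by
      intro u u'
      constructor
      · rintro (h | h)
        · refine ⟨0, ?_⟩
          rw [zpow_zero, inv_one, one_mul, mul_one]
          apply Equiv.ext
          intro a
          rw [hFapp, hFapp, h]
        · refine ⟨1, ?_⟩
          rw [zpow_one]
          apply Equiv.ext
          intro a
          rw [Equiv.Perm.mul_apply, Equiv.Perm.mul_apply, hx, hFapp, hFapp, hxinv1]
          unfold g
          rcases z2_cases (φ k a) with hp | hp
          · rw [if_pos hp, if_neg (by rw [map_add, hp, map_one]; decide), h]
            ring
          · rw [if_neg (by rw [hp]; decide), if_pos (by rw [map_add, hp, map_one]; decide), h,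
              neg_neg]
            ring
      · rintro ⟨n, hn⟩
        have h0 := Equiv.ext_iff.1 hn 0
        rw [hFapp, g_zero, Equiv.Perm.mul_apply, Equiv.Perm.mul_apply, hxz, hFapp, hxinv] at h0
        rw [zero_add] at h0
        unfold g at h0
        by_cases hp : φ k ((n : ℤ) : ZMod (2*k)) = 0
        · rw [if_pos hp] at h0
          left
          linear_combination h0
        · rw [if_neg hp] at h0
          right
          linear_combination h0
    have e := Quot.congr
      (ra := fun (u u' : {u : ZMod (2*k) // φ k u = 1 ∧ u ≠ -u}) => u'.1 = u.1 ∨ u'.1 = -u.1)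
      (rb := fun (y y' : {y : Equiv.Perm (ZMod (2*k)) // IsStrictlyEdgeTransitive k x y}) =>
        ∃ n : ℤ, (y' : Equiv.Perm (ZMod (2*k))) = (x ^ n)⁻¹ * (y : Equiv.Perm (ZMod (2*k))) * x ^ n)
      (Equiv.ofBijective F hFbij) hrel
    rw [← Nat.card_congr e, card_quot hk]
    by_cases hpar : k % 2 = 0
    · rw [if_pos hpar]
    · rw [if_neg hpar]
      omega
end

section
/- Let k ≥ 1, let x be the standard 2k-cycle on ZMod(2k) (the permutation a ↦ a + 1), let p be a divisor of 2k, and let y be a free involution of ZMod(2k) commuting with x^p. If some a ∈ ZMod(2k) satisfies y(a) ≡ a (mod p), then p divides k (equivalently d = 2k/p is even) and y(a) = a + k. -/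
/-- If `y` is a free involution of `ZMod (2k)` commuting with `x^p`
(`x` the standard `2k`-cycle, `p ∣ 2k`) and `y a ≡ a (mod p)` for some `a`, then
`p ∣ k` (i.e. `d = 2k/p` is even) and `y a = a + k`. -/
theorem stmt_8 (k p : ℕ) (hk : 1 ≤ k) (hp : p ∣ 2 * k)
    (x : Equiv.Perm (ZMod (2 * k))) (hx : ∀ a, x a = a + 1)
    (y : Equiv.Perm (ZMod (2 * k))) (hy : y ^ 2 = 1) (hyfree : ∀ a, y a ≠ a)
    (hcomm : Commute y (x ^ p))
    (a : ZMod (2 * k))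
    (ha : ZMod.castHom hp (ZMod p) (y a) = ZMod.castHom hp (ZMod p) a) :
    p ∣ k ∧ y a = a + (k : ZMod (2 * k)) := by
  haveI : NeZero (2 * k) := ⟨by omega⟩
  have hp0 : 0 < p := by
    rcases Nat.eq_zero_or_pos p with h | h
    · subst h; have := Nat.eq_zero_of_zero_dvd hp; omega
    · exact h
  -- x ^ n translates by n
  have hxp : ∀ (n : ℕ) (b : ZMod (2 * k)), (x ^ n) b = b + n := by
    intro n
    induction n with
    | zero => intro b; simp
    | succ n ih =>
        intro b
        rw [pow_succ, Equiv.Perm.mul_apply, ih, hx]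
        push_cast; ring
  -- y commutes with translation by p
  have hyt : ∀ b : ZMod (2 * k), y (b + p) = y b + p := by
    intro b
    have h := congrArg (fun f : Equiv.Perm (ZMod (2 * k)) => f b) hcomm.eq
    simpa [Equiv.Perm.mul_apply, hxp] using h
  -- y commutes with translation by p * m
  have hytm : ∀ (m : ℕ) (b : ZMod (2 * k)), y (b + (p * m : ℕ)) = y b + (p * m : ℕ) := by
    intro m
    induction m with
    | zero => intro b; simp
    | succ m ih =>
        intro b
        have : ((p * (m + 1) : ℕ) : ZMod (2 * k)) = ((p * m : ℕ) : ZMod (2 * k)) + p := by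
          push_cast; ring
        rw [this, ← add_assoc, hyt, ih, add_assoc]
  -- extract t with y a = a + p * t
  set c : ZMod (2 * k) := y a - a with hc
  have hcast : (ZMod.castHom hp (ZMod p)) c = 0 := by
    rw [hc, map_sub, ha, sub_self]
  have hcv : ((c.val : ℕ) : ZMod p) = 0 := by
    rwa [ZMod.castHom_apply, ZMod.cast_eq_val] at hcast
  have hdvd : p ∣ c.val := (ZMod.natCast_eq_zero_iff _ _).mp hcv
  obtain ⟨t, ht⟩ := hdvd
  set m := p * t with hm
  have hya : y a = a + (m : ZMod (2 * k)) := by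
    have : c = ((m : ℕ) : ZMod (2 * k)) := by rw [← ht, ZMod.natCast_val, ZMod.cast_id]
    rw [hc] at this; linear_combination this
  -- involution: a = y (y a) = a + 2 m
  have h2m : ((2 * m : ℕ) : ZMod (2 * k)) = 0 := by
    have h1 : y (y a) = a := by
      have := congrArg (fun f : Equiv.Perm (ZMod (2 * k)) => f a) hy
      simpa [pow_two, Equiv.Perm.mul_apply] using this
    have h2 : y (y a) = a + (m : ℕ) + (m : ℕ) := by
      rw [hya, hytm t a, ← hya, hya]
    rw [h1] at h2
    push_cast
    linear_combination - h2
  have hmne : ((m : ℕ) : ZMod (2 * k)) ≠ 0 := by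
    intro h
    apply hyfree a
    rw [hya, h, add_zero]
  have hdvd2 : 2 * k ∣ 2 * m := (ZMod.natCast_eq_zero_iff (2 * m) (2 * k)).mp h2m
  have hndvd : ¬ 2 * k ∣ m := fun h =>
    hmne ((ZMod.natCast_eq_zero_iff m (2 * k)).mpr h)
  have hkdvd : k ∣ m := by
    have h2 : (2 : ℕ) ≠ 0 := by norm_num
    exact (mul_dvd_mul_iff_left h2).mp hdvd2
  obtain ⟨q, hq⟩ := hkdvd
  have hqodd : ¬ 2 ∣ q := by
    rintro ⟨j, hj⟩
    exact hndvd ⟨j, by rw [hq, hj]; ring⟩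
  obtain ⟨j, hj⟩ : ∃ j, q = 2 * j + 1 := ⟨q / 2, by omega⟩
  have hmk : m = 2 * k * j + k := by rw [hq, hj]; ring
  have hcastk : ((m : ℕ) : ZMod (2 * k)) = (k : ZMod (2 * k)) := by
    rw [hmk, Nat.cast_add, Nat.cast_mul, ZMod.natCast_self, zero_mul, zero_add]
  constructor
  · have hpm : p ∣ m := ⟨t, rfl⟩
    have := Nat.dvd_sub hpm (hp.mul_right j)
    have hsub : m - 2 * k * j = k := by omega
    rwa [hsub] at this
  · rw [hya, hcastk]
end

section
/- Let k ≥ 1 and let x be the standard 2k-cycle on ZMod(2k) (the permutation a ↦ a + 1). Every free involution y of ZMod(2k) commuting with x² is either equal to x^k (the translation a ↦ a + k) or equal to the shift involution y_t for a unique t with 0 ≤ t ≤ k − 1; moreover y_t commutes with x if and only if 2t + 1 = k (in which case y_t = x^k). -/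
/-- The underlying function of the shift involution `y_t` of `ZMod (2k)`:
`a ↦ a + (2t+1)` if `a` is even, `a ↦ a - (2t+1)` if `a` is odd. -/
def shiftFun (k t : ℕ) (a : ZMod (2 * k)) : ZMod (2 * k) :=
  if a.val % 2 = 0 then a + ((2 * t + 1 : ℕ) : ZMod (2 * k))
  else a - ((2 * t + 1 : ℕ) : ZMod (2 * k))

/-- Every free involution `y` of `ZMod (2k)` commuting with `x²`
is either `x^k` or the shift involution `y_t` for a unique `0 ≤ t ≤ k - 1`;
moreover `y_t` commutes with `x` iff `2t + 1 = k`, in which case `y_t = x^k`. -/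
theorem stmt_9 (k : ℕ) (hk : 1 ≤ k)
    (x : Equiv.Perm (ZMod (2 * k))) (hx : ∀ a, x a = a + 1)
    (y : Equiv.Perm (ZMod (2 * k))) (hy : y ^ 2 = 1) (hyfree : ∀ a, y a ≠ a)
    (hcomm : Commute y (x ^ 2)) :
    (y = x ^ k ∨ ∃ t : ℕ, t < k ∧ ∀ a, y a = shiftFun k t a) ∧
    (∀ t t' : ℕ, t < k → t' < k →
      (∀ a, y a = shiftFun k t a) → (∀ a, y a = shiftFun k t' a) → t = t') ∧
    (∀ t : ℕ, t < k → (∀ a, y a = shiftFun k t a) →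
      (Commute y x ↔ 2 * t + 1 = k)) ∧
    (∀ t : ℕ, t < k → (∀ a, y a = shiftFun k t a) → 2 * t + 1 = k → y = x ^ k) := by
  haveI : NeZero (2 * k) := ⟨by omega⟩
  haveI : Fact (1 < 2 * k) := ⟨by omega⟩
  -- powers of x are translations
  have hxpow : ∀ (n : ℕ) (a : ZMod (2 * k)), (x ^ n) a = a + (n : ZMod (2 * k)) := by
    intro n
    induction n with
    | zero => intro a; simp
    | succ n ih =>
      intro a
      rw [pow_succ, Equiv.Perm.mul_apply, hx, ih]
      push_cast; ring
  have hx2 : ∀ a, (x ^ 2) a = a + 2 := by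
    intro a; rw [hxpow]; norm_num
  have h2 : ∀ a, y (a + 2) = y a + 2 := by
    intro a
    have h := congrArg (fun p : Equiv.Perm (ZMod (2 * k)) => p a) hcomm
    simp only [Equiv.Perm.mul_apply] at h
    simp only [hx2] at h
    exact h
  have hstep : ∀ (n : ℕ) (a : ZMod (2 * k)), y (a + (2 * n : ℕ)) = y a + (2 * n : ℕ) := by
    intro n
    induction n with
    | zero => intro a; simp
    | succ n ih =>
      intro a
      have hc : ((2 * (n + 1) : ℕ) : ZMod (2 * k)) = ((2 * n : ℕ) : ZMod (2 * k)) + 2 := by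
        push_cast; ring
      rw [hc, ← add_assoc, h2, ih, add_assoc]
  have hcastval : ∀ a : ZMod (2 * k), ((a.val : ℕ) : ZMod (2 * k)) = a := by
    intro a; exact ZMod.natCast_rightInverse a
  have heven : ∀ a : ZMod (2 * k), a.val % 2 = 0 → y a = y 0 + a := by
    intro a ha
    have hn : 2 * (a.val / 2) = a.val := by omega
    have hca : ((2 * (a.val / 2) : ℕ) : ZMod (2 * k)) = a := by rw [hn, hcastval]
    calc y a = y (0 + ((2 * (a.val / 2) : ℕ) : ZMod (2 * k))) := by rw [zero_add, hca]
      _ = y 0 + ((2 * (a.val / 2) : ℕ) : ZMod (2 * k)) := hstep _ 0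
      _ = y 0 + a := by rw [hca]
  have hodd : ∀ a : ZMod (2 * k), a.val % 2 = 1 → y a = y 1 + a - 1 := by
    intro a ha
    have hn : 1 + 2 * (a.val / 2) = a.val := by omega
    have hca : (1 : ZMod (2 * k)) + ((2 * (a.val / 2) : ℕ) : ZMod (2 * k)) = a := by
      calc (1 : ZMod (2 * k)) + ((2 * (a.val / 2) : ℕ) : ZMod (2 * k))
          = ((1 + 2 * (a.val / 2) : ℕ) : ZMod (2 * k)) := by push_cast; ring
        _ = a := by rw [hn]; exact hcastval a
    calc y a = y (1 + ((2 * (a.val / 2) : ℕ) : ZMod (2 * k))) := by rw [hca]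
      _ = y 1 + ((2 * (a.val / 2) : ℕ) : ZMod (2 * k)) := hstep _ 1
      _ = y 1 + a - 1 := by linear_combination hca
  have hyy : ∀ a, y (y a) = a := by
    intro a
    have h := congrArg (fun p : Equiv.Perm (ZMod (2 * k)) => p a) hy
    simpa [pow_two, Equiv.Perm.mul_apply] using h
  -- doubling lemma
  have hdouble : ∀ c : ZMod (2 * k), c + c = 0 → c = 0 ∨ c = ((k : ℕ) : ZMod (2 * k)) := by
    intro c hc
    have h1 : ((c.val + c.val : ℕ) : ZMod (2 * k)) = 0 := by
      push_cast [hcastval]; exact hc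
    have h2' : (2 * k) ∣ (c.val + c.val) := (ZMod.natCast_eq_zero_iff _ _).mp h1
    have hlt : c.val < 2 * k := c.val_lt
    obtain ⟨m, hm⟩ := h2'
    have hm2 : m < 2 := by
      by_contra hmc
      push_neg at hmc
      have : 2 * k * 2 ≤ 2 * k * m := Nat.mul_le_mul_left _ hmc
      omega
    have : c.val = 0 ∨ c.val = k := by interval_cases m <;> omega
    rcases this with h | h
    · left; rw [← hcastval c, h]; simp
    · right; rw [← hcastval c, h]
  have hkk : ((k : ℕ) : ZMod (2 * k)) + ((k : ℕ) : ZMod (2 * k)) = 0 := by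
    have : ((k + k : ℕ) : ZMod (2 * k)) = 0 := by
      rw [show k + k = 2 * k by ring, ZMod.natCast_self]
    push_cast at this; exact this
  -- Part 4 first
  have hP4 : ∀ t : ℕ, t < k → (∀ a, y a = shiftFun k t a) → 2 * t + 1 = k → y = x ^ k := by
    intro t ht hyt h2t
    ext a
    rw [hyt a, hxpow]
    unfold shiftFun
    rw [h2t]
    by_cases hp : a.val % 2 = 0
    · simp [hp]
    · simp only [hp, if_false]
      rw [sub_eq_iff_eq_add]
      rw [add_assoc, hkk, add_zero]
  refine ⟨?_, ?_, ?_, hP4⟩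
  · -- main dichotomy
    rcases Nat.mod_two_eq_zero_or_one (y 0).val with h0 | h0
    · -- (y 0).val even : y = x^k
      left
      have hy0 : y (y 0) = y 0 + y 0 := by rw [heven (y 0) h0, add_comm]
      have hy00 : y 0 + y 0 = 0 := by rw [← hy0, hyy]
      have hy0k : y 0 = ((k : ℕ) : ZMod (2 * k)) := by
        rcases hdouble _ hy00 with h | h
        · exact absurd h (hyfree 0)
        · exact h
      have hkval : ((k : ℕ) : ZMod (2 * k)).val = k := ZMod.val_cast_of_lt (by omega)
      have hkeven : k % 2 = 0 := by rw [← hkval, ← hy0k]; exact h0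
      -- determine y 1
      have hy1 : y 1 = 1 + ((k : ℕ) : ZMod (2 * k)) := by
        rcases Nat.mod_two_eq_zero_or_one (y 1).val with h1 | h1
        · -- even: contradiction
          exfalso
          have : y (y 1) = y 0 + y 1 := heven (y 1) h1
          rw [hyy] at this
          have hy1e : y 1 = 1 - ((k : ℕ) : ZMod (2 * k)) := by
            rw [hy0k] at this
            linear_combination -this
          have hy1e' : y 1 = ((1 + k : ℕ) : ZMod (2 * k)) := by
            rw [hy1e, sub_eq_iff_eq_add]
            push_cast
            rw [add_assoc, hkk, add_zero]
          have hv : (y 1).val = 1 + k := by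
            rw [hy1e']; exact ZMod.val_cast_of_lt (by omega)
          omega
        · have : y (y 1) = y 1 + y 1 - 1 := by rw [hodd (y 1) h1]
          rw [hyy] at this
          have hd : (y 1 - 1) + (y 1 - 1) = 0 := by linear_combination -this
          rcases hdouble _ hd with h | h
          · exfalso; exact hyfree 1 (by linear_combination h)
          · linear_combination h
      ext a
      rw [hxpow]
      by_cases hp : a.val % 2 = 0
      · rw [heven a hp, hy0k, add_comm]
      · rw [hodd a (by omega), hy1]; ring
    · -- (y 0).val odd : shift involution
      right
      set v := (y 0).val with hv
      refine ⟨v / 2, by have := (y 0).val_lt; omega, ?_⟩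
      have hvrep : ((2 * (v / 2) + 1 : ℕ) : ZMod (2 * k)) = y 0 := by
        have : 2 * (v / 2) + 1 = v := by omega
        rw [this, hv, hcastval]
      have hy1 : y 1 = 1 - y 0 := by
        have : y (y 0) = y 1 + y 0 - 1 := by rw [hodd (y 0) h0]
        rw [hyy 0] at this
        linear_combination -this
      intro a
      unfold shiftFun
      by_cases hp : a.val % 2 = 0
      · rw [if_pos hp, heven a hp, hvrep, add_comm]
      · rw [if_neg hp, hodd a (by omega), hy1, hvrep]; ring
  · -- uniqueness
    intro t t' ht ht' h h'
    have h0 : shiftFun k t 0 = shiftFun k t' 0 := by rw [← h 0, ← h' 0]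
    simp only [shiftFun, ZMod.val_zero, Nat.zero_mod, reduceIte, zero_add] at h0
    have hvt : ((2 * t + 1 : ℕ) : ZMod (2 * k)).val = 2 * t + 1 :=
      ZMod.val_cast_of_lt (by omega)
    have hvt' : ((2 * t' + 1 : ℕ) : ZMod (2 * k)).val = 2 * t' + 1 :=
      ZMod.val_cast_of_lt (by omega)
    have h0v := congrArg ZMod.val h0
    rw [hvt, hvt'] at h0v
    omega
  · -- commuting criterion
    intro t ht hyt
    constructor
    · intro hc
      have h01 : y (x 0) = x (y 0) := by
        have h := congrArg (fun p : Equiv.Perm (ZMod (2 * k)) => p 0) hc.eq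
        simpa [Equiv.Perm.mul_apply] using h
      rw [hx, hx, zero_add] at h01
      have hv0 : (0 : ZMod (2 * k)).val % 2 = 0 := by simp
      have hv1 : (1 : ZMod (2 * k)).val % 2 = 1 := by rw [ZMod.val_one]
      rw [hyt 1, hyt 0] at h01
      unfold shiftFun at h01
      rw [if_neg (by omega), if_pos hv0, zero_add] at h01
      have hcast : ((2 * t + 1 + (2 * t + 1) : ℕ) : ZMod (2 * k)) = 0 := by
        push_cast at h01 ⊢
        linear_combination -h01
      have hdvd : 2 * k ∣ (2 * t + 1 + (2 * t + 1)) :=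
        (ZMod.natCast_eq_zero_iff _ _).mp hcast
      have hdvd2 : 2 * k ∣ 2 * (2 * t + 1) := by
        convert hdvd using 1; ring
      have hkd : k ∣ 2 * t + 1 :=
        (Nat.mul_dvd_mul_iff_left (by norm_num : 0 < 2)).mp hdvd2
      have hle : k ≤ 2 * t + 1 := Nat.le_of_dvd (by omega) hkd
      have hd2 : k ∣ (2 * t + 1 - k) := Nat.dvd_sub hkd dvd_rfl
      have hz := Nat.eq_zero_of_dvd_of_lt hd2 (by omega)
      omega
    · intro h2t
      rw [hP4 t ht hyt h2t]
      exact (Commute.refl x).pow_left k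
end

section
/- Let k ≥ 1, 0 ≤ t ≤ k − 1, let x be the standard 2k-cycle on ZMod(2k) and y_t the shift involution. Then the permutation y_t ∘ x^{−1} sends every odd element b to b + 2t and every even element a to a − 2(t+1); its cycles through odd elements all have length k/gcd(t,k) and there are gcd(t,k) of them, while its cycles through even elements all have length k/gcd(t+1,k) and there are gcd(t+1,k) of them. In particular the one-vertex map with monodromy group ⟨x, y_t⟩ has exactly gcd(t,k) + gcd(t+1,k) faces. -/
lemma card_quot_eq_card_range {α β : Type*} (r : α → α → Prop) (f : α → β)
    (h : ∀ a b, r a b ↔ f a = f b) :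
    Nat.card (Quot r) = Nat.card (Set.range f) := by
  apply Nat.card_congr
  refine Equiv.ofBijective (Quot.lift (fun a => (⟨f a, Set.mem_range_self a⟩ : Set.range f))
    (fun a b hab => Subtype.ext ((h a b).1 hab))) ⟨?_, ?_⟩
  · intro u v
    induction u using Quot.ind with | _ a =>
    induction v using Quot.ind with | _ b =>
    intro huv
    exact Quot.sound ((h a b).2 (congrArg Subtype.val huv))
  · rintro ⟨w, a, rfl⟩
    exact ⟨Quot.mk r a, rfl⟩

lemma card_range_nat {α : Type*} (d : ℕ) (f : α → ℕ) (hlt : ∀ a, f a < d)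
    (hsurj : ∀ j, j < d → ∃ a, f a = j) : Nat.card (Set.range f) = d := by
  have h : Set.range f = ↑(Finset.Iio d) := by
    ext j
    simp only [Set.mem_range, Finset.coe_Iio, Set.mem_Iio]
    exact ⟨fun ⟨a, ha⟩ => ha ▸ hlt a, hsurj j⟩
  rw [h, Nat.card_eq_card_finite_toFinset (Finset.finite_toSet _)]
  simp [Nat.card_Iio]

-- key number theory lemma
lemma exists_int_mul_iff (n s : ℕ) [NeZero n] (z : ZMod n) :
    (∃ w : ℤ, z = (w : ZMod n) * (s : ZMod n)) ↔ Nat.gcd s n ∣ z.val := by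
  have hgdvd : Nat.gcd s n ∣ n := Nat.gcd_dvd_right s n
  haveI : NeZero (Nat.gcd s n) := ⟨Nat.gcd_ne_zero_right (NeZero.ne n)⟩
  constructor
  · rintro ⟨w, rfl⟩
    rw [← ZMod.natCast_eq_zero_iff _ (Nat.gcd s n)]
    have := ZMod.natCast_val (n := n) (R := ZMod (Nat.gcd s n)) ((w : ZMod n) * (s : ZMod n))
    rw [this]
    rw [ZMod.cast_mul hgdvd, ZMod.cast_intCast hgdvd, ZMod.cast_natCast hgdvd]
    have hs : ((s : ℕ) : ZMod (Nat.gcd s n)) = 0 :=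
      (ZMod.natCast_eq_zero_iff _ _).2 (Nat.gcd_dvd_left s n)
    rw [hs, mul_zero]
  · rintro ⟨w0, hw0⟩
    refine ⟨Nat.gcdA s n * w0, ?_⟩
    have hz : z = ((z.val : ℕ) : ZMod n) := (ZMod.natCast_rightInverse z).symm
    have hb : ((Nat.gcd s n : ℕ) : ZMod n) = (s : ZMod n) * ((Nat.gcdA s n : ℤ) : ZMod n) := by
      have := Nat.gcd_eq_gcd_ab s n
      calc ((Nat.gcd s n : ℕ) : ZMod n) = (((Nat.gcd s n : ℕ) : ℤ) : ZMod n) := by push_cast; ring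
        _ = ((s * Nat.gcdA s n + n * Nat.gcdB s n : ℤ) : ZMod n) := by rw [← this]
        _ = (s : ZMod n) * ((Nat.gcdA s n : ℤ) : ZMod n) := by
            push_cast
            simp [ZMod.natCast_self]
    rw [hz, hw0]
    push_cast
    rw [hb]
    ring

lemma modEq_two_mul_iff_div {g x y : ℕ} (hxy : x % 2 = y % 2) :
    x ≡ y [MOD 2*g] ↔ x/2 % g = y/2 % g := by
  rw [Nat.modEq_iff_dvd, show ((2*g:ℕ):ℤ) = 2*(g:ℕ) by push_cast; ring]
  have hx : (x:ℤ) = 2*((x/2 : ℕ):ℤ) + ((x%2 : ℕ):ℤ) := by exact_mod_cast (Nat.div_add_mod x 2).symm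
  have hy : (y:ℤ) = 2*((y/2 : ℕ):ℤ) + ((y%2 : ℕ):ℤ) := by exact_mod_cast (Nat.div_add_mod y 2).symm
  have key : (y:ℤ) - x = 2*(((y/2:ℕ):ℤ) - ((x/2:ℕ):ℤ)) := by
    rw [hx, hy, hxy]; ring
  rw [key, mul_dvd_mul_iff_left (two_ne_zero (α := ℤ)), ← Nat.modEq_iff_dvd]
  exact Iff.rfl

lemma main_parity (k : ℕ) (hk : 1 ≤ k) (p : Equiv.Perm (ZMod (2*k))) (e c : ℕ)
    (hp : ∀ b : ZMod (2*k), b.val % 2 = e → p b = b + ((2*c : ℕ) : ZMod (2*k))) :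
    (∀ b : ZMod (2*k), b.val % 2 = e → Function.minimalPeriod ⇑p b = k / Nat.gcd c k) ∧
    (∀ b b' : ZMod (2*k), b.val % 2 = e → p.SameCycle b b' → b'.val % 2 = e) ∧
    (∀ b b' : ZMod (2*k), b.val % 2 = e → b'.val % 2 = e →
       (p.SameCycle b b' ↔ b.val / 2 % Nat.gcd c k = b'.val / 2 % Nat.gcd c k)) := by
  haveI : NeZero (2*k) := ⟨by omega⟩
  have hadd : ∀ u v : ZMod (2*k), (u+v).val % 2 = (u.val + v.val) % 2 := by
    intro u v
    rw [ZMod.val_add]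
    exact Nat.mod_mod_of_dvd _ ⟨k, rfl⟩
  have hev : ∀ w : ZMod (2*k), (2*w).val % 2 = 0 := by
    intro w
    have h2 : (2:ZMod (2*k))*w = w + w := two_mul w
    rw [h2, hadd]; omega
  have hshift : ∀ (u w : ZMod (2*k)), (u + 2*w).val % 2 = u.val % 2 := by
    intro u w; rw [hadd]; have := hev w; omega
  have hc2 : ((2*c : ℕ) : ZMod (2*k)) = 2 * (c : ZMod (2*k)) := by push_cast; ring
  have hiter : ∀ (m : ℕ) (b : ZMod (2*k)), b.val % 2 = e →
      (p ^ m) b = b + (m : ZMod (2*k)) * (2 * (c : ZMod (2*k))) := by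
    intro m
    induction m with
    | zero => intro b hb; simp
    | succ m ih =>
      intro b hb
      have h1 : p b = b + 2 * (c : ZMod (2*k)) := by rw [hp b hb, hc2]
      have h2 : (b + 2*(c:ZMod (2*k))).val % 2 = e := by rw [hshift]; exact hb
      rw [pow_succ, Equiv.Perm.mul_apply, h1, ih _ h2]
      push_cast; ring
  have hzpow : ∀ (i : ℤ) (b : ZMod (2*k)), b.val % 2 = e →
      (p ^ i) b = b + (i : ZMod (2*k)) * (2 * (c : ZMod (2*k))) := by
    intro i b hb
    cases i with
    | ofNat m =>
      rw [Int.ofNat_eq_coe, zpow_natCast, hiter m b hb]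
      push_cast; ring
    | negSucc m =>
      set q := b - ((m+1:ℕ):ZMod (2*k)) * (2*(c:ZMod (2*k))) with hqdef
      have hqb : q + 2*(((m+1:ℕ):ZMod (2*k)) * (c:ZMod (2*k))) = b := by
        rw [hqdef]; ring
      have hq : q.val % 2 = e := by rw [← hb, ← hqb, hshift]
      have h1 : (p ^ (m+1)) q = b := by
        rw [hiter (m+1) q hq, ← hqb]; push_cast; ring
      have h2 : (p ^ (Int.negSucc m)) b = q := by
        rw [zpow_negSucc, Equiv.Perm.inv_eq_iff_eq]
        exact h1.symm
      rw [h2, hqdef, Int.cast_negSucc]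
      push_cast; ring
  refine ⟨?_, ?_, ?_⟩
  · intro b hb
    have hper : ∀ m : ℕ, Function.IsPeriodicPt ⇑p m b ↔
        addOrderOf ((2*c:ℕ) : ZMod (2*k)) ∣ m := by
      intro m
      have hit : (⇑p)^[m] b = b + (m : ZMod (2*k)) * (2*(c:ZMod (2*k))) := by
        rw [Equiv.Perm.iterate_eq_pow, hiter m b hb]
      rw [Function.IsPeriodicPt, Function.IsFixedPt, hit,
        addOrderOf_dvd_iff_nsmul_eq_zero, nsmul_eq_mul, hc2, add_eq_left]
    have h1 : Function.minimalPeriod ⇑p b ∣ addOrderOf ((2*c:ℕ) : ZMod (2*k)) :=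
      Function.IsPeriodicPt.minimalPeriod_dvd ((hper _).2 dvd_rfl)
    have h2 : addOrderOf ((2*c:ℕ) : ZMod (2*k)) ∣ Function.minimalPeriod ⇑p b :=
      (hper _).1 (Function.isPeriodicPt_minimalPeriod ⇑p b)
    rw [Nat.dvd_antisymm h1 h2, ZMod.addOrderOf_coe _ (by omega : 2*k ≠ 0),
      Nat.gcd_mul_left, Nat.mul_div_mul_left _ _ (by norm_num : 0 < 2), Nat.gcd_comm]
  · rintro b b' hb ⟨i, hi⟩
    rw [← hi, hzpow i b hb, show (i : ZMod (2*k)) * (2*(c:ZMod (2*k))) =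
      2 * ((i : ZMod (2*k)) * c) by ring, hshift]
    exact hb
  · intro b b' hb hb'
    have hsc : p.SameCycle b b' ↔ ∃ w : ℤ, b' - b = (w : ZMod (2*k)) * ((2*c:ℕ) : ZMod (2*k)) := by
      constructor
      · rintro ⟨i, hi⟩
        exact ⟨i, by rw [← hi, hzpow i b hb, hc2]; ring⟩
      · rintro ⟨w, hw⟩
        refine ⟨w, ?_⟩
        rw [hzpow w b hb, ← hc2]
        linear_combination -hw
    rw [hsc, exists_int_mul_iff (2*k) (2*c) (b' - b), Nat.gcd_mul_left]
    set g := Nat.gcd c k with hg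
    have hgpos : 0 < g := Nat.gcd_pos_of_pos_right c hk
    haveI : NeZero (2*g) := ⟨by omega⟩
    have hGdvd : 2*g ∣ 2*k := mul_dvd_mul_left 2 (Nat.gcd_dvd_right c k)
    rw [← ZMod.natCast_eq_zero_iff _ (2*g)]
    have e1 : (((b'-b).val : ℕ) : ZMod (2*g)) = (b'.val : ZMod (2*g)) - (b.val : ZMod (2*g)) := by
      rw [ZMod.natCast_val (b' - b), ZMod.cast_sub hGdvd, ← ZMod.natCast_val, ← ZMod.natCast_val]
    rw [e1, sub_eq_zero, ZMod.natCast_eq_natCast_iff,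
      modEq_two_mul_iff_div (by omega : b'.val % 2 = b.val % 2)]
    exact eq_comm
/-- For the shift involution `y = y_t` and the standard `2k`-cycle
`x`, the permutation `y ∘ x⁻¹` sends every odd `b` to `b + 2t` and every even `a` to
`a - 2(t+1)`; its cycles through odd elements all have length `k / gcd(t,k)` and
there are `gcd(t,k)` of them, its cycles through even elements all have length
`k / gcd(t+1,k)` and there are `gcd(t+1,k)` of them; in particular the one-vertex map
`(x, y_t)` has exactly `gcd(t,k) + gcd(t+1,k)` faces. -/
theorem stmt_10 (k t : ℕ) (hk : 1 ≤ k) (ht : t < k)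
    (x : Equiv.Perm (ZMod (2 * k))) (hx : ∀ a, x a = a + 1)
    (y : Equiv.Perm (ZMod (2 * k))) (hy : ∀ a, y a = shiftFun k t a) :
    (∀ b : ZMod (2 * k), b.val % 2 = 1 →
      (y * x⁻¹) b = b + ((2 * t : ℕ) : ZMod (2 * k))) ∧
    (∀ a : ZMod (2 * k), a.val % 2 = 0 →
      (y * x⁻¹) a = a - ((2 * (t + 1) : ℕ) : ZMod (2 * k))) ∧
    (∀ b : ZMod (2 * k), b.val % 2 = 1 →
      Function.minimalPeriod ⇑(y * x⁻¹) b = k / Nat.gcd t k) ∧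
    Nat.card (Quot fun (b b' : {b : ZMod (2 * k) // b.val % 2 = 1}) =>
        (y * x⁻¹).SameCycle (b : ZMod (2 * k)) (b' : ZMod (2 * k)))
      = Nat.gcd t k ∧
    (∀ a : ZMod (2 * k), a.val % 2 = 0 →
      Function.minimalPeriod ⇑(y * x⁻¹) a = k / Nat.gcd (t + 1) k) ∧
    Nat.card (Quot fun (a a' : {a : ZMod (2 * k) // a.val % 2 = 0}) =>
        (y * x⁻¹).SameCycle (a : ZMod (2 * k)) (a' : ZMod (2 * k)))
      = Nat.gcd (t + 1) k ∧
    Nat.card (Quot (y * x⁻¹).SameCycle) = Nat.gcd t k + Nat.gcd (t + 1) k := by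
  haveI : NeZero (2*k) := ⟨by omega⟩
  set p := y * x⁻¹ with hpdef
  have hxinv : ∀ b : ZMod (2*k), x⁻¹ b = b - 1 := by
    intro b
    rw [Equiv.Perm.inv_eq_iff_eq, hx]
    ring
  have hadd : ∀ u v : ZMod (2*k), (u+v).val % 2 = (u.val + v.val) % 2 := by
    intro u v
    rw [ZMod.val_add]
    exact Nat.mod_mod_of_dvd _ ⟨k, rfl⟩
  have hone : (1 : ZMod (2*k)).val = 1 := by
    have : ((1:ℕ) : ZMod (2*k)).val = 1 % (2*k) := ZMod.val_natCast (2*k) 1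
    simpa [Nat.mod_eq_of_lt (show 1 < 2*k by omega)] using this
  have hsub1 : ∀ b : ZMod (2*k), (b - 1).val % 2 = (b.val + 1) % 2 := by
    intro b
    have h := hadd (b-1) 1
    rw [sub_add_cancel] at h
    rw [hone] at h
    omega
  have hodd : ∀ b : ZMod (2*k), b.val % 2 = 1 → p b = b + ((2*t : ℕ) : ZMod (2*k)) := by
    intro b hb
    have h0 : (b-1).val % 2 = 0 := by rw [hsub1]; omega
    rw [hpdef, Equiv.Perm.mul_apply, hxinv, hy, shiftFun, if_pos h0]
    push_cast; ring
  have heven : ∀ a : ZMod (2*k), a.val % 2 = 0 → p a = a - ((2*(t+1) : ℕ) : ZMod (2*k)) := by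
    intro a ha
    have h1 : (a-1).val % 2 = 1 := by rw [hsub1]; omega
    rw [hpdef, Equiv.Perm.mul_apply, hxinv, hy, shiftFun, if_neg (by omega)]
    push_cast; ring
  have heven' : ∀ a : ZMod (2*k), a.val % 2 = 0 → p a = a + ((2*(k - (t+1)) : ℕ) : ZMod (2*k)) := by
    intro a ha
    rw [heven a ha]
    have h2 : (2*(k - (t+1)) : ℕ) = 2*k - 2*(t+1) := by omega
    rw [h2, Nat.cast_sub (by omega : 2*(t+1) ≤ 2*k), ZMod.natCast_self]
    ring
  obtain ⟨Hmin1, Hpar1, Hsc1⟩ := main_parity k hk p 1 t hodd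
  obtain ⟨Hmin0, Hpar0, Hsc0⟩ := main_parity k hk p 0 (k - (t+1)) heven'
  have hgcd0 : Nat.gcd (k - (t+1)) k = Nat.gcd (t+1) k := Nat.gcd_self_sub_left (by omega)
  rw [hgcd0] at Hmin0 Hsc0
  have hg1pos : 0 < Nat.gcd t k := Nat.gcd_pos_of_pos_right t hk
  have hg2pos : 0 < Nat.gcd (t+1) k := Nat.gcd_pos_of_pos_right _ hk
  have hg1le : Nat.gcd t k ≤ k := Nat.le_of_dvd hk (Nat.gcd_dvd_right t k)
  have hg2le : Nat.gcd (t+1) k ≤ k := Nat.le_of_dvd hk (Nat.gcd_dvd_right _ k)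
  refine ⟨hodd, heven, Hmin1, ?_, Hmin0, ?_, ?_⟩
  · rw [card_quot_eq_card_range _ (fun b : {b : ZMod (2*k) // b.val % 2 = 1} => b.1.val / 2 % Nat.gcd t k)
        (fun b b' => Hsc1 b.1 b'.1 b.2 b'.2)]
    apply card_range_nat
    · intro a; exact Nat.mod_lt _ hg1pos
    · intro j hj
      refine ⟨⟨((2*j+1 : ℕ) : ZMod (2*k)), ?_⟩, ?_⟩
      · rw [ZMod.val_cast_of_lt (by omega)]; omega
      · simp only
        rw [ZMod.val_cast_of_lt (by omega)]
        have h3 : (2*j+1)/2 = j := by omega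
        rw [h3, Nat.mod_eq_of_lt hj]
  · rw [card_quot_eq_card_range _ (fun a : {a : ZMod (2*k) // a.val % 2 = 0} => a.1.val / 2 % Nat.gcd (t+1) k)
        (fun a a' => Hsc0 a.1 a'.1 a.2 a'.2)]
    apply card_range_nat
    · intro a; exact Nat.mod_lt _ hg2pos
    · intro j hj
      refine ⟨⟨((2*j : ℕ) : ZMod (2*k)), ?_⟩, ?_⟩
      · rw [ZMod.val_cast_of_lt (by omega)]; omega
      · simp only
        rw [ZMod.val_cast_of_lt (by omega)]
        have h3 : (2*j)/2 = j := by omega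
        rw [h3, Nat.mod_eq_of_lt hj]
  · rw [card_quot_eq_card_range _ (fun b : ZMod (2*k) =>
        if b.val % 2 = 1 then b.val/2 % Nat.gcd t k else Nat.gcd t k + b.val/2 % Nat.gcd (t+1) k) ?_]
    · apply card_range_nat
      · intro a
        split
        · have := Nat.mod_lt (a.val/2) hg1pos; omega
        · have := Nat.mod_lt (a.val/2) hg2pos; omega
      · intro j hj
        by_cases hjg : j < Nat.gcd t k
        · refine ⟨((2*j+1:ℕ) : ZMod (2*k)), ?_⟩
          have hv : ((2*j+1:ℕ) : ZMod (2*k)).val = 2*j+1 := ZMod.val_cast_of_lt (by omega)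
          simp only [hv]
          rw [if_pos (by omega)]
          have h3 : (2*j+1)/2 = j := by omega
          rw [h3, Nat.mod_eq_of_lt hjg]
        · refine ⟨((2*(j - Nat.gcd t k):ℕ) : ZMod (2*k)), ?_⟩
          have hv : ((2*(j - Nat.gcd t k):ℕ) : ZMod (2*k)).val = 2*(j - Nat.gcd t k) :=
            ZMod.val_cast_of_lt (by omega)
          simp only [hv]
          rw [if_neg (by omega)]
          have h3 : (2*(j - Nat.gcd t k))/2 = j - Nat.gcd t k := by omega
          rw [h3, Nat.mod_eq_of_lt (by omega)]
          omega
    · intro b b'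
      constructor
      · intro hsc
        have hb2 : b.val % 2 = 0 ∨ b.val % 2 = 1 := by omega
        rcases hb2 with h0 | h1
        · have h0' : b'.val % 2 = 0 := Hpar0 b b' h0 hsc
          rw [if_neg (by omega), if_neg (by omega)]
          have h4 := (Hsc0 b b' h0 h0').1 hsc
          omega
        · have h1' : b'.val % 2 = 1 := Hpar1 b b' h1 hsc
          rw [if_pos h1, if_pos h1']
          exact (Hsc1 b b' h1 h1').1 hsc
      · intro hFeq
        have hb2 : b.val % 2 = 0 ∨ b.val % 2 = 1 := by omega
        have hb'2 : b'.val % 2 = 0 ∨ b'.val % 2 = 1 := by omega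
        rcases hb2 with h0 | h1 <;> rcases hb'2 with h0' | h1'
        · apply (Hsc0 b b' h0 h0').2
          rw [if_neg (by omega), if_neg (by omega)] at hFeq
          omega
        · exfalso
          rw [if_neg (by omega), if_pos h1'] at hFeq
          have := Nat.mod_lt (b'.val/2) hg1pos
          omega
        · exfalso
          rw [if_pos h1, if_neg (by omega)] at hFeq
          have := Nat.mod_lt (b.val/2) hg1pos
          omega
        · apply (Hsc1 b b' h1 h1').2
          rw [if_pos h1, if_pos h1'] at hFeq
          exact hFeq
end

section
/- Let k ≥ 1, 0 ≤ t ≤ k − 1, let x be the standard 2k-cycle on ZMod(2k) and y_t the shift involution. Then x^{−1} ∘ y_t ∘ x = y_{t'}, where t' is the unique integer with 0 ≤ t' ≤ k − 1 and t' ≡ k − (t + 1) (mod k). -/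
/-- For the shift involution `y = y_t` and the standard `2k`-cycle
`x`, the conjugate `x⁻¹ ∘ y_t ∘ x` is the shift involution `y_{t'}`, where `t'` is
the unique integer with `0 ≤ t' ≤ k - 1` and `t' ≡ k - (t+1) (mod k)`. -/
theorem stmt_11 (k t : ℕ) (hk : 1 ≤ k) (ht : t < k)
    (x : Equiv.Perm (ZMod (2 * k))) (hx : ∀ a, x a = a + 1)
    (y : Equiv.Perm (ZMod (2 * k))) (hy : ∀ a, y a = shiftFun k t a)
    (t' : ℕ) (ht' : t' < k)
    (ht'mod : (t' : ZMod k) = ((k - (t + 1) : ℕ) : ZMod k)) :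
    ∀ a, (x⁻¹ * y * x) a = shiftFun k t' a := by
  haveI : NeZero k := ⟨by omega⟩
  haveI : NeZero (2 * k) := ⟨by omega⟩
  -- t' = k - (t+1) as naturals
  have hteq : t' = k - (t + 1) := by
    have h1 : (t' : ZMod k).val = ((k - (t + 1) : ℕ) : ZMod k).val := by rw [ht'mod]
    rwa [ZMod.val_natCast_of_lt ht', ZMod.val_natCast_of_lt (by omega)] at h1
  have hsum : t' + t + 1 = k := by omega
  have hc : ((2 * t + 1 : ℕ) : ZMod (2 * k)) + ((2 * t' + 1 : ℕ) : ZMod (2 * k)) = 0 := by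
    have : ((2 * t + 1) + (2 * t' + 1) : ℕ) = 2 * k := by omega
    rw [← Nat.cast_add, this, ZMod.natCast_self]
  have hxinv : ∀ a : ZMod (2 * k), x⁻¹ a = a - 1 := by
    intro a
    rw [Equiv.Perm.inv_def, Equiv.symm_apply_eq, hx]
    ring
  have hone : (1 : ZMod (2 * k)).val = 1 := ZMod.val_one_eq_one_mod (2 * k) ▸ by
    simp [ZMod.val_one_eq_one_mod, Nat.mod_eq_of_lt (by omega : 1 < 2 * k)]
  have hparity : ∀ a : ZMod (2 * k), (a + 1).val % 2 = (a.val + 1) % 2 := by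
    intro a
    rw [ZMod.val_add, hone, Nat.mod_mod_of_dvd _ ⟨k, rfl⟩]
  intro a
  simp only [Equiv.Perm.mul_apply, hx, hy, hxinv]
  unfold shiftFun
  rcases Nat.even_or_odd a.val with h | h
  · have h0 : a.val % 2 = 0 := Nat.even_iff.mp h
    have h1 : (a + 1).val % 2 = 1 := by rw [hparity]; omega
    rw [if_neg (by omega : ¬ (a + 1).val % 2 = 0), if_pos h0]
    linear_combination -hc
  · have h0 : a.val % 2 = 1 := Nat.odd_iff.mp h
    have h1 : (a + 1).val % 2 = 0 := by rw [hparity]; omega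
    rw [if_pos h1, if_neg (by omega : ¬ a.val % 2 = 0)]
    linear_combination hc
end

section
/- Let k ≥ 2, 0 ≤ t ≤ k − 1 with 2t + 1 ≠ k, let x be the standard 2k-cycle on ZMod(2k) and y_t the shift involution. Then the centralizer of ⟨x, y_t⟩ in the symmetric group of ZMod(2k) equals ⟨x²⟩, a cyclic group of order k; that is, the one-vertex map with monodromy group ⟨x, y_t⟩ is strictly edge-transitive with automorphism group isomorphic to Z_k. -/
private lemma xpow_apply {k : ℕ} (x : Equiv.Perm (ZMod (2 * k))) (hx : ∀ a, x a = a + 1) :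
    ∀ (n : ℕ) (a : ZMod (2 * k)), (x ^ n) a = a + (n : ZMod (2 * k)) := by
  intro n
  induction n with
  | zero => simp
  | succ n ih =>
    intro a
    rw [pow_succ, Equiv.Perm.mul_apply, hx, ih]
    push_cast
    ring

private lemma val_add_parity {k : ℕ} (hk : 0 < k) (a b : ZMod (2 * k)) :
    (a + b).val % 2 = (a.val + b.val) % 2 := by
  haveI : NeZero (2 * k) := ⟨by omega⟩
  rw [ZMod.val_add, Nat.mod_mod_of_dvd _ ⟨k, rfl⟩]

private lemma zpowers_isCyclic {G : Type*} [Group G] (g : G) :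
    IsCyclic (Subgroup.zpowers g) := by
  refine ⟨⟨⟨g, Subgroup.mem_zpowers g⟩, ?_⟩⟩
  rintro ⟨x, hx⟩
  obtain ⟨n, rfl⟩ := Subgroup.mem_zpowers_iff.mp hx
  exact ⟨n, Subtype.ext (by simp)⟩

/-- For `k ≥ 2`, `0 ≤ t ≤ k - 1` with `2t + 1 ≠ k`, the centralizer
of `⟨x, y_t⟩` in the symmetric group of `ZMod (2k)` equals `⟨x²⟩`, a cyclic group of
order `k` (the one-vertex map `(x, y_t)` is strictly edge-transitive with
automorphism group `Z_k`). -/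
theorem stmt_12 (k t : ℕ) (hk : 2 ≤ k) (ht : t < k) (hne : 2 * t + 1 ≠ k)
    (x : Equiv.Perm (ZMod (2 * k))) (hx : ∀ a, x a = a + 1)
    (y : Equiv.Perm (ZMod (2 * k))) (hy : ∀ a, y a = shiftFun k t a) :
    Subgroup.centralizer
        ((Subgroup.closure {x, y} : Subgroup (Equiv.Perm (ZMod (2 * k)))) :
          Set (Equiv.Perm (ZMod (2 * k))))
      = Subgroup.zpowers (x ^ 2) ∧
    IsCyclic (Subgroup.zpowers (x ^ 2)) ∧
    Nat.card (Subgroup.zpowers (x ^ 2)) = k := by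
  haveI : NeZero (2 * k) := ⟨by omega⟩
  have hk0 : 0 < k := by omega
  set s : ZMod (2 * k) := ((2 * t + 1 : ℕ) : ZMod (2 * k)) with hs_def
  have hslt : 2 * t + 1 < 2 * k := by omega
  have hsval : s.val = 2 * t + 1 := ZMod.val_cast_of_lt hslt
  have htwo_val : ((2 : ZMod (2 * k))).val = 2 := by
    have : ((2 : ℕ) : ZMod (2 * k)).val = 2 := ZMod.val_cast_of_lt (by omega)
    simpa using this
  -- 2*s ≠ 0
  have h2s : s + s ≠ 0 := by
    intro h
    rw [hs_def, ← Nat.cast_add] at h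
    have hd : 2 * k ∣ (2 * t + 1 + (2 * t + 1)) := (ZMod.natCast_eq_zero_iff _ _).mp h
    have hd2 : 2 * k ∣ 2 * (2 * t + 1) := by rw [two_mul (2 * t + 1)]; exact hd
    have hdk : k ∣ 2 * t + 1 := (mul_dvd_mul_iff_left (by norm_num : (2:ℕ) ≠ 0)).mp hd2
    have := Nat.eq_of_dvd_of_lt_two_mul (by omega) hdk (by omega)
    exact hne this
  -- y commutes with x^2
  have hyx2 : Commute (x ^ 2) y := by
    have key : ∀ a : ZMod (2 * k), y (a + 2) = y a + 2 := by
      intro a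
      have hp : (a + 2).val % 2 = a.val % 2 := by
        rw [val_add_parity hk0, htwo_val, Nat.add_mod_right]
      rw [hy, hy, shiftFun, shiftFun, hp]
      split <;> ring
    refine Equiv.ext fun a => ?_
    simp only [Equiv.Perm.mul_apply]
    have hx2 : ∀ b : ZMod (2 * k), (x ^ 2) b = b + 2 := by
      intro b
      rw [xpow_apply x hx 2 b]; norm_num
    rw [hx2, hx2, key]
  refine ⟨?_, zpowers_isCyclic _, ?_⟩
  · apply le_antisymm
    · -- centralizer ≤ zpowers (x^2)
      intro f hf
      rw [Subgroup.mem_centralizer_iff] at hf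
      have hfx := hf x (Subgroup.subset_closure (by simp))
      have hfy := hf y (Subgroup.subset_closure (by simp))
      -- f is translation by c := f 0
      have step : ∀ a, f (a + 1) = f a + 1 := by
        intro a
        have := congrArg (fun g : Equiv.Perm (ZMod (2 * k)) => g a) hfx
        simp only [Equiv.Perm.mul_apply, hx] at this
        exact this.symm
      have hnat : ∀ n : ℕ, f ((n : ZMod (2 * k))) = (n : ZMod (2 * k)) + f 0 := by
        intro n
        induction n with
        | zero => simp
        | succ n ih => push_cast; rw [step, ih]; ring
      have hlin : ∀ a, f a = a + f 0 := by
        intro a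
        have := hnat a.val
        rwa [ZMod.natCast_val, ZMod.cast_id] at this
      set c : ZMod (2 * k) := f 0 with hc
      -- evaluate commuting with y at 0
      have h0 : y c = s + c := by
        have := congrArg (fun g : Equiv.Perm (ZMod (2 * k)) => g 0) hfy
        simp only [Equiv.Perm.mul_apply] at this
        have hy0 : y 0 = s := by
          rw [hy, shiftFun, if_pos (by simp), zero_add, hs_def]
        rw [← hc, hy0, hlin s] at this
        exact this
      have hceven : c.val % 2 = 0 := by
        by_contra hodd
        rw [hy, shiftFun, if_neg hodd, ← hs_def] at h0
        have : s + s = 0 := by linear_combination -h0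
        exact h2s this
      obtain ⟨m, hm⟩ : ∃ m, c.val = 2 * m := ⟨c.val / 2, by omega⟩
      refine Subgroup.mem_zpowers_iff.mpr ⟨(m : ℤ), ?_⟩
      rw [zpow_natCast, ← pow_mul]
      refine Equiv.ext fun a => ?_
      rw [xpow_apply x hx (2 * m) a, hlin a]
      congr 1
      rw [← hm, ZMod.natCast_val, ZMod.cast_id]
    · -- zpowers (x^2) ≤ centralizer
      intro g hg
      obtain ⟨n, rfl⟩ := Subgroup.mem_zpowers_iff.mp hg
      rw [Subgroup.mem_centralizer_iff]
      intro h hh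
      have hle : Subgroup.closure {x, y} ≤ Subgroup.centralizer {(x ^ 2) ^ n} := by
        refine (Subgroup.closure_le _).mpr ?_
        rintro z hz
        simp only [SetLike.mem_coe, Subgroup.mem_centralizer_iff]
        rintro w rfl
        rcases hz with rfl | hz
        · exact (((Commute.refl z).pow_left 2).zpow_left n).eq
        · rcases hz with rfl
          exact (hyx2.zpow_left n).eq
      have := hle hh
      rw [Subgroup.mem_centralizer_iff] at this
      exact (this _ rfl).symm
  · -- cardinality
    rw [Nat.card_zpowers]
    rw [orderOf_eq_iff hk0]
    constructor
    · refine Equiv.ext fun a => ?_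
      rw [← pow_mul, xpow_apply x hx (2 * k) a]
      simp [ZMod.natCast_self]
    · intro m hmk hm0 hcon
      have h2 : (x ^ (2 * m)) (0 : ZMod (2 * k)) = 0 := by rw [pow_mul, hcon]; rfl
      rw [xpow_apply x hx (2 * m) 0, zero_add] at h2
      have : ((2 * m : ℕ) : ZMod (2 * k)).val = 0 := by rw [h2]; simp
      rw [ZMod.val_cast_of_lt (by omega)] at this
      omega
end

section
/- Let k ≥ 1. There exists a unit t of ZMod(k) with t³ = 1 and 1 + t + t² = 0 in ZMod(k) if and only if 9 does not divide k and every prime divisor p of k with p ≠ 3 satisfies p ≡ 1 (mod 3). -/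
section Aux

/-- If `1 + t + t² = 0` then `t` is a unit and `t³ = 1`. -/
lemma root_isUnit {k : ℕ} (t : ZMod k) (h : 1 + t + t ^ 2 = 0) : IsUnit t :=
  IsUnit.of_mul_eq_one (a := t) (-(1 + t)) (by linear_combination -h)

lemma root_cube {k : ℕ} (t : ZMod k) (h : 1 + t + t ^ 2 = 0) : t ^ 3 = 1 := by
  linear_combination (t - 1) * h

/-- unit criterion in `ZMod (p^e)` -/
lemma unit_of_prime_pow {p e : ℕ} (pp : p.Prime) (he : e ≠ 0) (x : ZMod (p ^ e))
    (hx : ¬ p ∣ x.val) : IsUnit x := by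
  haveI : NeZero (p ^ e) := ⟨pow_ne_zero e pp.pos.ne'⟩
  have h := (ZMod.isUnit_iff_coprime x.val (p ^ e)).2
    (Nat.Coprime.pow_right e ((Nat.Prime.coprime_iff_not_dvd pp).2 hx).symm)
  rwa [ZMod.natCast_zmod_val] at h

/-- Root in `ZMod (p^e)` for `p ≡ 1 [MOD 3]`. -/
lemma root_prime_pow {p e : ℕ} (pp : p.Prime) (he : e ≠ 0) (hp3 : p % 3 = 1) :
    ∃ t : ZMod (p ^ e), 1 + t + t ^ 2 = 0 := by
  haveI : Fact p.Prime := ⟨pp⟩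
  haveI : NeZero (p ^ e) := ⟨pow_ne_zero e pp.pos.ne'⟩
  have hp3' : p ≠ 3 := by omega
  have hpn3 : ¬ p ∣ 3 := fun h => hp3' ((Nat.prime_dvd_prime_iff_eq pp (by norm_num)).1 h)
  -- 3 divides the order of the unit group
  have hcard : (3 : ℕ) ∣ Fintype.card (ZMod (p ^ e))ˣ := by
    rw [ZMod.card_units_eq_totient, Nat.totient_prime_pow pp (Nat.pos_of_ne_zero he)]
    exact Dvd.dvd.mul_left ⟨(p - 1) / 3, by omega⟩ _
  haveI : Fact (Nat.Prime 3) := ⟨by norm_num⟩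
  obtain ⟨u, hu⟩ := exists_prime_orderOf_dvd_card 3 hcard
  set t : ZMod (p ^ e) := (u : ZMod (p ^ e)) with ht
  have ht3 : t ^ 3 = 1 := by
    have : u ^ 3 = 1 := by rw [← hu]; exact pow_orderOf_eq_one u
    simpa using congrArg (Units.val) this
  have htne : t ≠ 1 := by
    intro h
    have : u = 1 := Units.ext h
    rw [this, orderOf_one] at hu; omega
  -- t - 1 is a unit: otherwise p ∣ (t-1).val, and then the key trick shows t = 1
  have hunit : IsUnit (t - 1) := by
    apply unit_of_prime_pow pp he
    intro hdvd
    apply htne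
    -- t = 1 + y where y := t - 1 with p ∣ y.val
    set y : ZMod (p ^ e) := t - 1 with hy
    have hyc : (y.val : ZMod (p ^ e)) = y := ZMod.natCast_zmod_val y
    -- y * (3 + 3*y + y^2) = 0 from t^3 = 1
    have key : y * (3 + 3 * y + y ^ 2) = 0 := by
      have : t = y + 1 := by rw [hy]; ring
      rw [this] at ht3
      linear_combination ht3
    -- 3 + 3*y + y^2 is a unit
    have hu2 : IsUnit (3 + 3 * y + y ^ 2) := by
      apply unit_of_prime_pow pp he
      intro hd
      -- p ∣ (3 + 3y + y²).val ⇒ p ∣ 3 in ZMod p sense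
      have h1 : ((3 + 3 * y + y ^ 2 : ZMod (p ^ e)).val : ZMod p) = 0 :=
        (ZMod.natCast_eq_zero_iff _ p).2 hd
      have h2 : ((y.val : ℕ) : ZMod p) = 0 := (ZMod.natCast_eq_zero_iff _ p).2 hdvd
      have hcast : ∀ z : ZMod (p ^ e), ((z.val : ℕ) : ZMod p) =
          (ZMod.castHom (dvd_pow_self p he) (ZMod p)) z := by
        intro z
        rw [ZMod.castHom_apply, ← ZMod.natCast_val]
      rw [hcast] at h1 h2
      have h3 : (3 : ZMod p) = 0 := by
        have := h1
        rw [map_add, map_add, map_mul, map_pow, h2, map_ofNat] at this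
        simpa using this
      have : (p : ℕ) ∣ 3 := by
        have := (ZMod.natCast_eq_zero_iff 3 p).1 (by exact_mod_cast h3)
        exact this
      exact hpn3 this
    -- conclude y = 0
    have hy0 : y = 0 := (IsUnit.mul_left_eq_zero hu2).1 key
    rwa [hy, sub_eq_zero] at hy0
  -- from (t-1)(1+t+t²)=0 and t-1 unit
  have key2 : (t - 1) * (1 + t + t ^ 2) = 0 := by linear_combination ht3
  exact ⟨t, (IsUnit.mul_right_eq_zero hunit).1 key2⟩

end Aux

lemma root_mul {m n : ℕ} (h : m.Coprime n)
    (hm : ∃ t : ZMod m, 1 + t + t ^ 2 = 0) (hn : ∃ t : ZMod n, 1 + t + t ^ 2 = 0) :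
    ∃ t : ZMod (m * n), 1 + t + t ^ 2 = 0 := by
  obtain ⟨a, ha⟩ := hm
  obtain ⟨b, hb⟩ := hn
  let e := ZMod.chineseRemainder h
  refine ⟨e.symm (a, b), ?_⟩
  apply e.injective
  rw [map_add, map_add, map_one, map_pow, map_zero, RingEquiv.apply_symm_apply]
  exact Prod.ext (by simpa using ha) (by simpa using hb)

lemma exists_root : ∀ (k : ℕ), 1 ≤ k → ¬ (9 ∣ k) →
    (∀ p : ℕ, p.Prime → p ∣ k → p ≠ 3 → p % 3 = 1) →
    ∃ t : ZMod k, 1 + t + t ^ 2 = 0 := by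
  intro k
  induction k using Nat.strong_induction_on with
  | _ k ih =>
    intro hk h9 hp
    rcases eq_or_lt_of_le hk with h1 | h2
    · rw [← h1]; exact ⟨0, by decide⟩
    · -- k ≥ 2
      have hk0 : k ≠ 0 := by omega
      set p := k.minFac with hpdef
      have pp : p.Prime := Nat.minFac_prime (by omega)
      have pdvd : p ∣ k := Nat.minFac_dvd k
      set e := k.factorization p with hedef
      have he : e ≠ 0 := (Nat.Prime.factorization_pos_of_dvd pp hk0 pdvd).ne'
      have hsplit : p ^ e * (k / p ^ e) = k := Nat.ordProj_mul_ordCompl_eq_self k p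
      have hcop : (p ^ e).Coprime (k / p ^ e) :=
        Nat.Coprime.pow_left e (Nat.coprime_ordCompl pp hk0)
      have hcompl_dvd : (k / p ^ e) ∣ k := Nat.ordCompl_dvd k p
      have hcompl_lt : k / p ^ e < k :=
        Nat.div_lt_self (by omega) (Nat.one_lt_pow he pp.one_lt)
      -- root mod p^e
      have hppow : ∃ t : ZMod (p ^ e), 1 + t + t ^ 2 = 0 := by
        by_cases hp3 : p = 3
        · -- e = 1
          have he1 : e = 1 := by
            by_contra hne
            have : 2 ≤ e := by omega
            have : 9 ∣ p ^ e := by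
              rw [hp3]
              calc (9 : ℕ) = 3 ^ 2 := by norm_num
                _ ∣ 3 ^ e := pow_dvd_pow 3 this
            exact h9 (this.trans (Nat.ordProj_dvd k p))
          rw [hp3, he1]
          exact ⟨1, by decide⟩
        · exact root_prime_pow pp he (hp p pp pdvd hp3)
      -- root mod k / p^e by induction
      have hcompl : ∃ t : ZMod (k / p ^ e), 1 + t + t ^ 2 = 0 := by
        apply ih _ hcompl_lt (Nat.pos_of_dvd_of_pos hcompl_dvd (by omega))
        · exact fun h => h9 (h.trans hcompl_dvd)
        · exact fun q hq hqd hq3 => hp q hq (hqd.trans hcompl_dvd) hq3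
      have := root_mul hcop hppow hcompl
      rwa [hsplit] at this



/-- (Case N6 arithmetic criterion.) There is a unit `t` of
`ZMod k` with `t³ = 1` and `1 + t + t² = 0` iff `9 ∤ k` and every prime divisor
`p ≠ 3` of `k` satisfies `p ≡ 1 (mod 3)`. -/
theorem stmt_14 (k : ℕ) (hk : 1 ≤ k) :
    (∃ t : ZMod k, IsUnit t ∧ t ^ 3 = 1 ∧ 1 + t + t ^ 2 = 0) ↔
      (¬ (9 ∣ k) ∧ ∀ p : ℕ, p.Prime → p ∣ k → p ≠ 3 → p % 3 = 1) := by
  constructor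
  · rintro ⟨t, -, -, ht⟩
    constructor
    · intro h9
      have hmap : ∀ r : ZMod 9, 1 + r + r ^ 2 ≠ 0 := by decide
      apply hmap (ZMod.castHom h9 (ZMod 9) t)
      have := congrArg (ZMod.castHom h9 (ZMod 9)) ht
      rwa [map_add, map_add, map_one, map_pow, map_zero] at this
    · intro p hpp hpd hp3
      haveI : Fact p.Prime := ⟨hpp⟩
      set r := ZMod.castHom hpd (ZMod p) t with hr
      have hroot : 1 + r + r ^ 2 = 0 := by
        have := congrArg (ZMod.castHom hpd (ZMod p)) ht
        rwa [map_add, map_add, map_one, map_pow, map_zero] at this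
      have hr3 : r ^ 3 = 1 := root_cube r hroot
      have hrne : r ≠ 1 := by
        intro h
        rw [h] at hroot
        have h3 : ((3 : ℕ) : ZMod p) = 0 := by push_cast; linear_combination hroot
        have := (ZMod.natCast_eq_zero_iff 3 p).1 h3
        exact hp3 ((Nat.prime_dvd_prime_iff_eq hpp (by norm_num)).1 this)
      -- r is a unit of order 3
      obtain ⟨u, hu⟩ := root_isUnit r hroot
      have hord : orderOf u = 3 := by
        have hu3 : u ^ 3 = 1 := Units.ext (by simpa [hu] using hr3)
        have hdvd := orderOf_dvd_of_pow_eq_one hu3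
        rcases (Nat.prime_three).eq_one_or_self_of_dvd _ hdvd with h | h
        · exfalso
          apply hrne
          have : u = 1 := orderOf_eq_one_iff.1 h
          rw [← hu, this, Units.val_one]
        · exact h
      have hcard : (3 : ℕ) ∣ Fintype.card (ZMod p)ˣ := hord ▸ orderOf_dvd_card
      rw [ZMod.card_units_eq_totient, Nat.totient_prime hpp] at hcard
      have hp2 := hpp.two_le
      omega
  · rintro ⟨h9, hp⟩
    obtain ⟨t, ht⟩ := exists_root k hk h9 hp
    exact ⟨t, root_isUnit t ht, root_cube t ht, ht⟩
end

section
/- Let k ≥ 2 and let x be the standard 2k-cycle on ZMod(2k) (the permutation a ↦ a + 1). The permutation x^k ∘ x^{−1} = x^{k−1} has exactly one cycle (orbit) on ZMod(2k) if k is even, and exactly two cycles if k is odd. Consequently the unique regular one-vertex map with k edges (given by the free involution y = x^k) has one face and genus k/2 when k is even, and two faces and genus (k−1)/2 when k is odd. -/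
/-- For `k ≥ 2` and the standard `2k`-cycle `x : a ↦ a + 1` of
`ZMod (2k)`, the permutation `x^k ∘ x⁻¹ = x^{k-1}` has exactly one cycle (orbit) if
`k` is even and exactly two if `k` is odd; consequently the unique regular one-vertex
map with `k` edges (the free involution `x^k`) has one face and genus `k/2` when `k`
is even, and two faces and genus `(k-1)/2` when `k` is odd (where the genus `g`
satisfies the Euler formula `2 - 2g = 1 - k + F`). -/
theorem stmt_17 (k : ℕ) (hk : 2 ≤ k)
    (x : Equiv.Perm (ZMod (2 * k))) (hx : ∀ a, x a = a + 1) :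
    x ^ k * x⁻¹ = x ^ (k - 1) ∧
    Nat.card (Quot (x ^ k * x⁻¹).SameCycle) = (if k % 2 = 0 then 1 else 2) ∧
    ∃ g : ℕ, g = (if k % 2 = 0 then k / 2 else (k - 1) / 2) ∧
      (2 : ℤ) - 2 * (g : ℤ) = 1 - (k : ℤ) + (if k % 2 = 0 then 1 else 2) := by
  haveI : NeZero (2 * k) := ⟨by omega⟩
  have h1 : x ^ k * x⁻¹ = x ^ (k - 1) := by
    have h : x ^ (k - 1) * x = x ^ k := by
      rw [← pow_succ]; congr 1; omega
    rw [← h, mul_inv_cancel_right]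
  have hpow : ∀ (n : ℕ) (a : ZMod (2 * k)), (x ^ n) a = a + (n : ZMod (2 * k)) := by
    intro n
    induction n with
    | zero => simp
    | succ n ih =>
      intro a
      rw [pow_succ, Equiv.Perm.mul_apply, hx, ih]
      push_cast; ring
  set c : ZMod (2 * k) := ((k - 1 : ℕ) : ZMod (2 * k)) with hc
  have hnat : ∀ (n : ℕ) (a : ZMod (2 * k)), ((x ^ (k - 1)) ^ n) a = a + n • c := by
    intro n a
    rw [← pow_mul, hpow, hc, nsmul_eq_mul]
    push_cast; ring
  have hzpow : ∀ (j : ℤ) (a : ZMod (2 * k)), ((x ^ (k - 1)) ^ j) a = a + j • c := by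
    intro j a
    rcases j with n | n
    · rw [Int.ofNat_eq_coe, zpow_natCast, hnat, natCast_zsmul]
    · rw [zpow_negSucc]
      set b := (((x ^ (k - 1)) ^ (n + 1))⁻¹ : Equiv.Perm (ZMod (2 * k))) a with hb0
      have hb : ((x ^ (k - 1)) ^ (n + 1)) b = a := by
        rw [hb0]; exact Equiv.apply_symm_apply _ _
      rw [hnat] at hb
      show b = a + Int.negSucc n • c
      rw [negSucc_zsmul, ← hb]
      abel
  set g := Nat.gcd (2 * k) (k - 1) with hg
  have hgcd : g = if k % 2 = 0 then 1 else 2 := by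
    have h2 : 2 * k = 2 + 2 * (k - 1) := by omega
    rw [hg, h2, Nat.gcd_add_mul_right_left (k - 1) 2 2]
    rcases Nat.even_or_odd k with he | ho
    · have : Nat.Coprime 2 (k - 1) := Nat.coprime_two_left.mpr (by
        rcases he with ⟨m, hm⟩; rw [Nat.odd_iff]; omega)
      simp [this, Nat.even_iff.mp he]
    · have h2d : 2 ∣ (k - 1) := by rw [Nat.odd_iff] at ho; omega
      rw [Nat.gcd_eq_left h2d]
      simp [Nat.odd_iff.mp ho]
  refine ⟨h1, ?_, ?_⟩
  · rw [h1]
    have key : ∀ a b : ZMod (2 * k), (x ^ (k - 1)).SameCycle a b ↔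
        (QuotientAddGroup.mk a : ZMod (2 * k) ⧸ AddSubgroup.zmultiples c)
          = QuotientAddGroup.mk b := by
      intro a b
      rw [QuotientAddGroup.eq]
      constructor
      · rintro ⟨i, hi⟩
        rw [hzpow] at hi
        exact ⟨i, by rw [← hi]; abel⟩
      · rintro ⟨i, hi⟩
        refine ⟨i, ?_⟩
        rw [hzpow]
        have : i • c = -a + b := hi
        rw [this]; abel
    have hbij : Function.Bijective
        (Quot.lift (fun a => (QuotientAddGroup.mk a :
            ZMod (2 * k) ⧸ AddSubgroup.zmultiples c))
          (fun a b h => (key a b).1 h)) := by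
      constructor
      · intro p q
        induction p using Quot.ind with | _ a =>
        induction q using Quot.ind with | _ b =>
        intro h
        exact Quot.sound ((key a b).2 h)
      · intro q
        induction q using QuotientAddGroup.induction_on with | _ a =>
        exact ⟨Quot.mk _ a, rfl⟩
    rw [Nat.card_eq_of_bijective _ hbij]
    have hcard := AddSubgroup.card_eq_card_quotient_mul_card_addSubgroup
      (AddSubgroup.zmultiples c)
    rw [Nat.card_zmod, Nat.card_zmultiples, hc,
      ZMod.addOrderOf_coe (k - 1) (by omega : 2 * k ≠ 0)] at hcard
    have hdvd : g ∣ 2 * k := Nat.gcd_dvd_left _ _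
    have hgpos : 0 < g := Nat.gcd_pos_of_pos_left _ (by omega)
    have hq : 2 * k / g > 0 := Nat.div_pos (Nat.le_of_dvd (by omega) hdvd) hgpos
    have hmul : g * (2 * k / g) = 2 * k := Nat.mul_div_cancel' hdvd
    rw [← hg] at hcard
    have : Nat.card (ZMod (2 * k) ⧸ AddSubgroup.zmultiples c) = g := by
      apply Nat.eq_of_mul_eq_mul_right hq
      rw [← hcard, hmul]
    rw [this, hgcd]
  · refine ⟨_, rfl, ?_⟩
    rcases Nat.even_or_odd k with he | ho
    · have h2 : k % 2 = 0 := Nat.even_iff.mp he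
      simp only [h2, reduceIte]
      omega
    · have h2 : k % 2 = 1 := Nat.odd_iff.mp ho
      simp only [h2]
      norm_num
      omega
end
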